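/- arXiv:math/9903017 — 2 statements merged into one kernel-verified Lean document; each statement's English description precedes it below -/
import Mathlib

section
/- Let γ be a composite plane curve, witnessed by a simple closed C¹ curve γ′ meeting the image of γ in the single point γ(t₀), which is not a crossing of γ, and let γ₁ and γ₂ be the components of γ, i.e. the restrictions γ|[0,t₀] and γ|[t₀,1] reparametrized to [0,1]. Then the crossing number is additive: c(γ) = c(γ₁) + c(γ₂). -/
open Set

/-- A (non-closed) plane curve: a C¹ map with nowhere-vanishing derivative on `[0,1]`,
distinct endpoints, whose self-intersections are finitely many transverse double points. -/
structure PlaneCurve where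
  toFun : ℝ → ℝ × ℝ
  contDiff : ContDiff ℝ 1 toFun
  deriv_ne : ∀ t ∈ Icc (0:ℝ) 1, deriv toFun t ≠ 0
  ends_ne : toFun 0 ≠ toFun 1
  multi_finite :
    {p : ℝ × ℝ | ∃ s ∈ Icc (0:ℝ) 1, ∃ t ∈ Icc (0:ℝ) 1,
      s ≠ t ∧ toFun s = p ∧ toFun t = p}.Finite
  double_point :
    ∀ p ∈ {p : ℝ × ℝ | ∃ s ∈ Icc (0:ℝ) 1, ∃ t ∈ Icc (0:ℝ) 1,
        s ≠ t ∧ toFun s = p ∧ toFun t = p},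
      ∃ s t : ℝ, s ≠ t ∧ {u : ℝ | u ∈ Icc (0:ℝ) 1 ∧ toFun u = p} = {s, t} ∧
        LinearIndependent ℝ ![deriv toFun s, deriv toFun t]

namespace PlaneCurve

/-- The set of crossings (multiple points) of a plane curve. -/
def crossings (γ : PlaneCurve) : Set (ℝ × ℝ) :=
  {p : ℝ × ℝ | ∃ s ∈ Icc (0:ℝ) 1, ∃ t ∈ Icc (0:ℝ) 1,
    s ≠ t ∧ γ.toFun s = p ∧ γ.toFun t = p}

/-- The crossing number `c(γ)`. -/
noncomputable def crossingNumber (γ : PlaneCurve) : ℕ := γ.crossings.ncard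

/-- The image of a plane curve. -/
def image (γ : PlaneCurve) : Set (ℝ × ℝ) := γ.toFun '' Icc 0 1

/-- `γ'` is similar to `γ`: same endpoints, and the two images meet in finitely
many points, at each of which the curves intersect transversely. -/
def Similar (γ' γ : PlaneCurve) : Prop :=
  γ'.toFun 0 = γ.toFun 0 ∧ γ'.toFun 1 = γ.toFun 1 ∧
  (γ'.image ∩ γ.image).Finite ∧
  ∀ s ∈ Icc (0:ℝ) 1, ∀ t ∈ Icc (0:ℝ) 1, γ'.toFun s = γ.toFun t →
    LinearIndependent ℝ ![deriv γ'.toFun s, deriv γ.toFun t]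

/-- The distance `d(γ)`: the minimal number of intersection points of `γ` with a
similar curve, discounting the two common endpoints. -/
noncomputable def distance (γ : PlaneCurve) : ℕ :=
  sInf {n : ℕ | ∃ γ' : PlaneCurve, Similar γ' γ ∧ (γ'.image ∩ γ.image).ncard = n + 2}

end PlaneCurve

/-- A simple closed C¹ plane curve. -/
structure SimpleClosedCurve where
  toFun : ℝ → ℝ × ℝ
  contDiff : ContDiff ℝ 1 toFun
  periodic : Function.Periodic toFun 1
  deriv_ne : ∀ t : ℝ, deriv toFun t ≠ 0
  injOn : InjOn toFun (Ico 0 1)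

/-- The image of a simple closed curve. -/
def SimpleClosedCurve.image (δ : SimpleClosedCurve) : Set (ℝ × ℝ) := Set.range δ.toFun

/-- A plane curve is composite if some simple closed curve meets it in exactly one
point, transversely, with crossings of `γ` in both complementary components. -/
def PlaneCurve.Composite (γ : PlaneCurve) : Prop :=
  ∃ δ : SimpleClosedCurve, ∃ p : ℝ × ℝ,
    δ.image ∩ γ.image = {p} ∧
    (∀ s ∈ Icc (0:ℝ) 1, ∀ u : ℝ, γ.toFun s = p → δ.toFun u = p →
      LinearIndependent ℝ ![deriv δ.toFun u, deriv γ.toFun s]) ∧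
    ∀ x ∉ δ.image, ∃ q ∈ γ.crossings, q ∈ connectedComponentIn δ.imageᶜ x

/-- A plane curve is prime if it is not composite. -/
def PlaneCurve.Prime (γ : PlaneCurve) : Prop := ¬ γ.Composite

/-- `p` is an isolated crossing of `γ`: some simple closed curve meets the image of `γ`
exactly in `p`, transversely to both strands of `γ` through `p`. -/
def PlaneCurve.IsolatedCrossing (γ : PlaneCurve) (p : ℝ × ℝ) : Prop :=
  p ∈ γ.crossings ∧ ∃ δ : SimpleClosedCurve,
    δ.image ∩ γ.image = {p} ∧
    ∀ s ∈ Icc (0:ℝ) 1, ∀ u : ℝ, γ.toFun s = p → δ.toFun u = p →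
      LinearIndependent ℝ ![deriv δ.toFun u, deriv γ.toFun s]


namespace JordanCurveAux
open Set intervalIntegral Function Complex


noncomputable def wind (c : ℝ → ℂ) (z : ℂ) : ℂ :=
  ∫ t in (-(1:ℝ)/2)..(1/2), deriv c t / (c t - z)

variable {c : ℝ → ℂ}

theorem F_cont (hc : ContDiff ℝ 1 c) {z : ℂ} (hz : z ∉ range c) :
    Continuous fun t => deriv c t / (c t - z) := by
  refine (hc.continuous_deriv le_rfl).div (hc.continuous.sub continuous_const) ?_
  intro t
  rw [sub_ne_zero]
  exact fun h => hz ⟨t, h⟩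

theorem wind_lattice (hc : ContDiff ℝ 1 c) (per : Function.Periodic c 1)
    {z : ℂ} (hz : z ∉ range c) : ∃ n : ℤ, wind c z = n * (2 * Real.pi * I) := by
  set F := fun t => deriv c t / (c t - z) with hF
  have hFc : Continuous F := F_cont hc hz
  have hne : ∀ t : ℝ, c t - z ≠ 0 := fun t => sub_ne_zero.2 fun h => hz ⟨t, h⟩
  set g := fun t : ℝ => ∫ s in (-(1:ℝ)/2)..t, F s with hg
  have hgd : ∀ t : ℝ, HasDerivAt g (F t) t := fun t =>
    intervalIntegral.integral_hasDerivAt_right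
      (hFc.intervalIntegrable _ _) hFc.aestronglyMeasurable.stronglyMeasurableAtFilter
      hFc.continuousAt
  set h := fun t : ℝ => Complex.exp (-g t) * (c t - z) with hh
  have hcd : ∀ t, HasDerivAt c (deriv c t) t :=
    fun t => (hc.differentiable one_ne_zero t).hasDerivAt
  have hhd : ∀ t : ℝ, HasDerivAt h 0 t := by
    intro t
    have h1 : HasDerivAt (fun u => Complex.exp (-g u)) (Complex.exp (-g t) * (-F t)) t :=
      ((hgd t).neg).cexp
    have h2 : HasDerivAt (fun u : ℝ => c u - z) (deriv c t) t := (hcd t).sub_const z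
    have h3 := h1.mul h2
    have key : -F t * (c t - z) = -(deriv c t) := by
      rw [neg_mul, hF]; simp only []; rw [div_mul_cancel₀ _ (hne t)]
    rw [show (0:ℂ) = cexp (-g t) * (-(deriv c t)) + cexp (-g t) * deriv c t by ring]
    rw [← key, ← mul_assoc]
    exact h3
  have hconst := is_const_of_deriv_eq_zero (fun t => (hhd t).differentiableAt)
    (fun t => (hhd t).deriv) (1/2 : ℝ) (-(1:ℝ)/2)
  have hgz : g (-(1:ℝ)/2) = 0 := intervalIntegral.integral_same
  have hcc : c (1/2) = c (-(1:ℝ)/2) := by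
    have hp := per (-(1:ℝ)/2)
    rw [show -(1:ℝ)/2 + 1 = 1/2 by norm_num] at hp
    exact hp
  have hexp : Complex.exp (-g (1/2)) = 1 := by
    have := hconst
    rw [hh] at this
    simp only [hgz, neg_zero, Complex.exp_zero, one_mul] at this
    rw [hcc] at this
    nth_rewrite 2 [← one_mul (c (-(1:ℝ)/2) - z)] at this
    exact mul_right_cancel₀ (hne (-(1:ℝ)/2)) this
  have hexp1 : Complex.exp (g (1/2)) = 1 := by
    rw [Complex.exp_neg] at hexp
    rwa [inv_eq_one] at hexp
  rw [Complex.exp_eq_one_iff] at hexp1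
  exact hexp1

theorem exists_shift (t : ℝ) : ∃ n : ℤ, t - n ∈ Icc (-(1:ℝ)/2) (1/2) := by
  refine ⟨⌊t + 1/2⌋, mem_Icc.2 ⟨?_, ?_⟩⟩
  · have := Int.floor_le (t + 1/2); linarith
  · have := Int.lt_floor_add_one (t + 1/2); linarith

theorem shift_eq {f : ℝ → ℂ} (per : Function.Periodic f 1) (t : ℝ) (n : ℤ) :
    f (t - n) = f t := by simpa using per.sub_zsmul_eq n (x := t)

theorem range_eq (per : Function.Periodic c 1) :
    range c = c '' Icc (-(1:ℝ)/2) (1/2) := by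
  apply subset_antisymm
  · rintro _ ⟨t, rfl⟩
    obtain ⟨n, hn⟩ := exists_shift t
    exact ⟨t - n, hn, shift_eq per t n⟩
  · rintro _ ⟨t, _, rfl⟩; exact ⟨t, rfl⟩

theorem periodic_bound {f : ℝ → ℂ} (hf : Continuous f) (per : Function.Periodic f 1) :
    ∃ M : ℝ, 0 ≤ M ∧ ∀ t, ‖f t‖ ≤ M := by
  obtain ⟨x, -, hx⟩ := isCompact_Icc.exists_isMaxOn (⟨0, by norm_num⟩ :
    (Icc (-(1:ℝ)/2) (1/2)).Nonempty) hf.norm.continuousOn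
  refine ⟨‖f x‖, norm_nonneg _, fun t => ?_⟩
  obtain ⟨n, hn⟩ := exists_shift t
  rw [← shift_eq per t n]
  exact hx hn

theorem dist_bound (hc : Continuous c) (per : Function.Periodic c 1) {z : ℂ}
    (hz : z ∉ range c) : ∃ d : ℝ, 0 < d ∧ ∀ t, d ≤ ‖c t - z‖ := by
  obtain ⟨x, -, hx⟩ := isCompact_Icc.exists_isMinOn (⟨0, by norm_num⟩ :
    (Icc (-(1:ℝ)/2) (1/2)).Nonempty) (hc.sub continuous_const).norm.continuousOn
  refine ⟨‖c x - z‖, ?_, fun t => ?_⟩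
  · rw [norm_pos_iff, sub_ne_zero]
    exact fun h => hz ⟨x, h⟩
  · obtain ⟨n, hn⟩ := exists_shift t
    calc ‖c x - z‖ ≤ ‖c (t - n) - z‖ := hx hn
    _ = ‖c t - z‖ := by rw [shift_eq per t n]

theorem deriv_periodic (per : Function.Periodic c 1) : Function.Periodic (deriv c) 1 := by
  intro t
  have h : (fun x => c (x + 1)) = c := funext per
  calc deriv c (t + 1) = deriv (fun x => c (x + 1)) t := (deriv_comp_add_const c 1 t).symm
  _ = deriv c t := by rw [h]

theorem wind_locconst (hc : ContDiff ℝ 1 c) (per : Function.Periodic c 1)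
    {z₀ : ℂ} (hz₀ : z₀ ∉ range c) :
    ∃ r > 0, ∀ z, z ∉ range c → ‖z - z₀‖ < r → wind c z = wind c z₀ := by
  obtain ⟨d, hd, hdist⟩ := dist_bound hc.continuous per hz₀
  obtain ⟨M, hM0, hM⟩ := periodic_bound (hc.continuous_deriv le_rfl) (deriv_periodic per)
  refine ⟨min (d/2) (Real.pi * d * d / (M + 1)), by positivity, fun z hz hr => ?_⟩
  have hrd : ‖z - z₀‖ < d/2 := lt_of_lt_of_le hr (min_le_left _ _)
  have hr2 : ‖z - z₀‖ < Real.pi * d * d / (M + 1) := lt_of_lt_of_le hr (min_le_right _ _)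
  have hdz : ∀ t, d/2 ≤ ‖c t - z‖ := by
    intro t
    have h1 : ‖c t - z₀‖ - ‖z - z₀‖ ≤ ‖c t - z‖ := by
      have := norm_sub_norm_le (c t - z₀) (z - z₀)
      have he : c t - z₀ - (z - z₀) = c t - z := by ring
      rw [he] at this
      linarith
    have := hdist t
    linarith
  have hne : ∀ t : ℝ, c t - z ≠ 0 := fun t => sub_ne_zero.2 fun h => hz ⟨t, h⟩
  have hne₀ : ∀ t : ℝ, c t - z₀ ≠ 0 := fun t => sub_ne_zero.2 fun h => hz₀ ⟨t, h⟩
  have hint1 : IntervalIntegrable (fun t => deriv c t / (c t - z)) MeasureTheory.volume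
      (-(1:ℝ)/2) (1/2) := (F_cont hc hz).intervalIntegrable _ _
  have hint0 : IntervalIntegrable (fun t => deriv c t / (c t - z₀)) MeasureTheory.volume
      (-(1:ℝ)/2) (1/2) := (F_cont hc hz₀).intervalIntegrable _ _
  have hsub : wind c z - wind c z₀
      = ∫ t in (-(1:ℝ)/2)..(1/2), (deriv c t / (c t - z) - deriv c t / (c t - z₀)) :=
    (intervalIntegral.integral_sub hint1 hint0).symm
  set C := M * ‖z - z₀‖ / (d/2 * d) with hC
  have hptw : ∀ t ∈ Set.uIoc (-(1:ℝ)/2) ((1:ℝ)/2),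
      ‖deriv c t / (c t - z) - deriv c t / (c t - z₀)‖ ≤ C := by
    intro t _
    rw [div_sub_div _ _ (hne t) (hne₀ t)]
    have hnum : deriv c t * (c t - z₀) - (c t - z) * deriv c t = deriv c t * (z - z₀) := by
      ring
    rw [hnum, norm_div, norm_mul, norm_mul]
    refine div_le_div₀ (by positivity) ?_ (by positivity) ?_
    · exact mul_le_mul_of_nonneg_right (hM t) (norm_nonneg _)
    · exact mul_le_mul (hdz t) (hdist t) hd.le (le_trans (by positivity) (hdz t))
  have hbound := intervalIntegral.norm_integral_le_of_norm_le_const hptw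
  rw [← hsub] at hbound
  have habs : |(1:ℝ)/2 - (-(1:ℝ)/2)| = 1 := by norm_num
  rw [habs, mul_one] at hbound
  have hC2π : C < 2 * Real.pi := by
    have hπ := Real.pi_pos
    have hx0 : (0:ℝ) ≤ ‖z - z₀‖ := norm_nonneg _
    have h1 : ‖z - z₀‖ * (M + 1) < Real.pi * d * d := by
      have := (lt_div_iff₀ (by positivity : (0:ℝ) < M + 1)).1 hr2
      linarith
    rw [hC, div_lt_iff₀ (by positivity)]
    nlinarith
  obtain ⟨n, hn⟩ := wind_lattice hc per hz
  obtain ⟨n₀, hn₀⟩ := wind_lattice hc per hz₀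
  have hdiff : wind c z - wind c z₀ = ((n - n₀ : ℤ) : ℂ) * (2 * Real.pi * I) := by
    rw [hn, hn₀]; push_cast; ring
  have hnormdiff : ‖wind c z - wind c z₀‖ = |((n - n₀ : ℤ) : ℝ)| * (2 * Real.pi) := by
    rw [hdiff]
    rw [show (((n - n₀ : ℤ)) : ℂ) * (2 * (Real.pi:ℂ) * I)
        = ((((n - n₀ : ℤ) : ℝ)):ℂ) * ((((2*Real.pi : ℝ)):ℂ) * I) by push_cast; ring]
    rw [norm_mul, norm_mul, Complex.norm_I, mul_one, Complex.norm_real, Complex.norm_real,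
      Real.norm_eq_abs, Real.norm_eq_abs,
      _root_.abs_of_nonneg (by positivity : (0:ℝ) ≤ 2*Real.pi)]
  have : |((n - n₀ : ℤ) : ℝ)| * (2 * Real.pi) < 2 * Real.pi := by
    rw [← hnormdiff]; exact lt_of_le_of_lt hbound hC2π
  have h01 : |((n - n₀ : ℤ) : ℝ)| < 1 := by
    have hπ := Real.pi_pos
    by_contra hcon
    push_neg at hcon
    nlinarith
  have : n = n₀ := by
    have h02 : |n - n₀| < 1 := by exact_mod_cast h01
    rw [abs_lt] at h02
    omega
  rw [hn, hn₀, this]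

theorem wind_const (hc : ContDiff ℝ 1 c) (per : Function.Periodic c 1)
    (hP : IsPreconnected (range c)ᶜ) {z₀ z₁ : ℂ} (h₀ : z₀ ∉ range c) (h₁ : z₁ ∉ range c) :
    wind c z₁ = wind c z₀ := by
  have hcpt : IsCompact (range c) := by
    rw [range_eq per]; exact isCompact_Icc.image hc.continuous
  have hSopen : IsOpen (range c)ᶜ := hcpt.isClosed.isOpen_compl
  by_contra hne
  set A := {z : ℂ | z ∉ range c ∧ wind c z = wind c z₀} with hA
  set B := {z : ℂ | z ∉ range c ∧ wind c z ≠ wind c z₀} with hB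
  have hAopen : IsOpen A := by
    rw [Metric.isOpen_iff]
    rintro z ⟨hz, hzw⟩
    obtain ⟨r, hr, hloc⟩ := wind_locconst hc per hz
    obtain ⟨r', hr', hball⟩ := Metric.isOpen_iff.1 hSopen z hz
    refine ⟨min r r', lt_min hr hr', fun y hy => ?_⟩
    have hyS : y ∈ (range c)ᶜ := hball (Metric.ball_subset_ball (min_le_right _ _) hy)
    have hyw := hloc y hyS (by
      rw [← dist_eq_norm]
      exact lt_of_lt_of_le (Metric.mem_ball.1 hy) (min_le_left _ _))
    exact ⟨hyS, hyw.trans hzw⟩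
  have hBopen : IsOpen B := by
    rw [Metric.isOpen_iff]
    rintro z ⟨hz, hzw⟩
    obtain ⟨r, hr, hloc⟩ := wind_locconst hc per hz
    obtain ⟨r', hr', hball⟩ := Metric.isOpen_iff.1 hSopen z hz
    refine ⟨min r r', lt_min hr hr', fun y hy => ?_⟩
    have hyS : y ∈ (range c)ᶜ := hball (Metric.ball_subset_ball (min_le_right _ _) hy)
    have hyw := hloc y hyS (by
      rw [← dist_eq_norm]
      exact lt_of_lt_of_le (Metric.mem_ball.1 hy) (min_le_left _ _))
    exact ⟨hyS, fun hcon => hzw (hyw ▸ hcon)⟩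
  have hsub : (range c)ᶜ ⊆ A ∪ B := by
    intro z hz
    by_cases h : wind c z = wind c z₀
    · exact Or.inl ⟨hz, h⟩
    · exact Or.inr ⟨hz, h⟩
  have hAne : ((range c)ᶜ ∩ A).Nonempty := ⟨z₀, h₀, h₀, rfl⟩
  have hBne : ((range c)ᶜ ∩ B).Nonempty := ⟨z₁, h₁, h₁, hne⟩
  obtain ⟨w, -, ⟨-, hw1⟩, ⟨-, hw2⟩⟩ := hP A B hAopen hBopen hsub hAne hBne
  exact hw2 hw1

theorem wind_zero (hc : ContDiff ℝ 1 c) (per : Function.Periodic c 1)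
    (hP : IsPreconnected (range c)ᶜ) {z : ℂ} (hz : z ∉ range c) : wind c z = 0 := by
  obtain ⟨B, hB0, hB⟩ := periodic_bound hc.continuous per
  obtain ⟨M, hM0, hM⟩ := periodic_bound (hc.continuous_deriv le_rfl) (deriv_periodic per)
  set z₀ : ℂ := ((B + M + 1 : ℝ) : ℂ) with hz₀def
  have hz₀norm : ‖z₀‖ = B + M + 1 := by
    rw [hz₀def, Complex.norm_real, Real.norm_eq_abs, _root_.abs_of_nonneg (by positivity)]
  have hz₀ : z₀ ∉ range c := by
    rintro ⟨t, ht⟩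
    have h1 := hB t
    rw [ht, hz₀norm] at h1
    linarith
  have hdz : ∀ t, M + 1 ≤ ‖c t - z₀‖ := by
    intro t
    have h1 : ‖z₀‖ - ‖c t‖ ≤ ‖z₀ - c t‖ := norm_sub_norm_le _ _
    rw [norm_sub_rev] at h1
    have := hB t
    rw [hz₀norm] at h1
    linarith
  have hne₀ : ∀ t : ℝ, c t - z₀ ≠ 0 := fun t => sub_ne_zero.2 fun h => hz₀ ⟨t, h⟩
  have hptw : ∀ t ∈ Set.uIoc (-(1:ℝ)/2) ((1:ℝ)/2),
      ‖deriv c t / (c t - z₀)‖ ≤ M / (M + 1) := by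
    intro t _
    rw [norm_div]
    exact div_le_div₀ hM0 (hM t) (by positivity) (hdz t)
  have hbound := intervalIntegral.norm_integral_le_of_norm_le_const hptw
  have habs : |(1:ℝ)/2 - (-(1:ℝ)/2)| = 1 := by norm_num
  rw [habs, mul_one] at hbound
  have hlt1 : M / (M + 1) < 1 := by
    rw [div_lt_one (by positivity)]; linarith
  obtain ⟨n₀, hn₀⟩ := wind_lattice hc per hz₀
  have hwz₀ : wind c z₀ = 0 := by
    have hnorm : ‖wind c z₀‖ = |(n₀ : ℝ)| * (2 * Real.pi) := by
      rw [hn₀]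
      rw [show ((n₀ : ℂ)) * (2 * (Real.pi:ℂ) * I)
          = (((n₀ : ℤ) : ℝ):ℂ) * ((((2*Real.pi : ℝ)):ℂ) * I) by push_cast; ring]
      rw [norm_mul, norm_mul, Complex.norm_I, mul_one, Complex.norm_real, Complex.norm_real,
        Real.norm_eq_abs, Real.norm_eq_abs,
        _root_.abs_of_nonneg (by positivity : (0:ℝ) ≤ 2*Real.pi)]
    have hπ := Real.pi_gt_three
    have h2 : |(n₀:ℝ)| * (2 * Real.pi) < 1 := by
      rw [← hnorm]
      have hb' : ‖wind c z₀‖ ≤ M / (M+1) := hbound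
      linarith
    have hn0 : n₀ = 0 := by
      by_contra hcon
      have : (1:ℝ) ≤ |(n₀:ℝ)| := by
        rw [← Int.cast_abs]
        exact_mod_cast Int.one_le_abs (by omega)
      nlinarith
    rw [hn₀, hn0]
    norm_num
  rw [wind_const hc per hP hz₀ hz, hwz₀]

set_option maxHeartbeats 4000000 in
theorem noJordan (hc : ContDiff ℝ 1 c) (per : Function.Periodic c 1)
    (hd : ∀ t, deriv c t ≠ 0) (inj : InjOn c (Ico 0 1)) :
    ¬ IsPreconnected (range c)ᶜ := by
  intro hP
  set p := c 0 with hp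
  set v := deriv c 0 with hv
  have hv0 : v ≠ 0 := hd 0
  set w : ℝ → ℂ := fun t => (c t - p) / v with hw
  set φ : ℝ → ℂ := fun t => deriv c t / v with hφ
  have hcd : ∀ t, HasDerivAt c (deriv c t) t := fun t => (hc.differentiable one_ne_zero t).hasDerivAt
  have hwd : ∀ t, HasDerivAt w (φ t) t := fun t => ((hcd t).sub_const p).div_const v
  have hφc : Continuous φ := (hc.continuous_deriv le_rfl).div_const v
  have hwc : Continuous w := (hc.continuous.sub continuous_const).div_const v
  have hφ0 : φ 0 = 1 := div_self hv0
  have hw0 : w 0 = 0 := by simp [hw, hp]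
  -- choose ρ with φ close to 1
  obtain ⟨ρ', hρ'0, hρ'⟩ : ∃ r > 0, ∀ t : ℝ, |t| < r → ‖φ t - 1‖ ≤ 1/10 := by
    have hcont : ContinuousAt (fun t => ‖φ t - 1‖) 0 :=
      ((hφc.sub continuous_const).norm).continuousAt
    have h0 : ‖φ 0 - 1‖ = 0 := by rw [hφ0]; simp
    obtain ⟨δ, hδ0, hδ⟩ := Metric.continuousAt_iff.1 hcont (1/10) (by norm_num)
    refine ⟨δ, hδ0, fun t ht => ?_⟩
    have h1 := hδ (show dist t 0 < δ by rwa [Real.dist_eq, sub_zero])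
    rw [Real.dist_eq, h0, sub_zero] at h1
    have habs : |‖φ t - 1‖| = ‖φ t - 1‖ := _root_.abs_of_nonneg (norm_nonneg _)
    linarith [habs.le, habs.ge]
  set ρ : ℝ := min (ρ'/2) (1/2) with hρdef
  have hρ0 : 0 < ρ := lt_min (by linarith) (by norm_num)
  have hρhalf : ρ ≤ 1/2 := min_le_right _ _
  have hφρ : ∀ t : ℝ, |t| ≤ ρ → ‖φ t - 1‖ ≤ 1/10 := fun t ht =>
    hρ' t (lt_of_le_of_lt ht (lt_of_le_of_lt (min_le_left _ _) (by linarith)))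
  -- w t close to t
  have hre : ∀ u : ℝ, HasDerivAt (fun x : ℝ => (x:ℂ)) 1 u := by
    intro u
    simpa using (hasDerivAt_id u).ofReal_comp
  have hwt : ∀ t : ℝ, |t| ≤ ρ → ‖w t - (t:ℂ)‖ ≤ (1/10) * |t| := by
    intro t ht
    have hint : ∫ u in (0:ℝ)..t, (φ u - 1) = (w t - (t:ℂ)) - (w 0 - ((0:ℝ):ℂ)) :=
      intervalIntegral.integral_eq_sub_of_hasDerivAt
        (fun u _ => (hwd u).sub (hre u))
        ((hφc.sub continuous_const).intervalIntegrable _ _)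
    rw [hw0] at hint
    simp only [Complex.ofReal_zero, sub_zero] at hint
    have hptw : ∀ u ∈ Set.uIoc (0:ℝ) t, ‖φ u - 1‖ ≤ 1/10 := by
      intro u hu
      rcases Set.mem_uIoc.1 hu with ⟨h1, h2⟩ | ⟨h1, h2⟩
      · have : |u| ≤ ρ := by
          rw [_root_.abs_of_pos h1]
          calc u ≤ t := h2
          _ ≤ |t| := le_abs_self t
          _ ≤ ρ := ht
        exact hφρ u this
      · have : |u| ≤ ρ := by
          rw [_root_.abs_of_nonpos h2]
          calc -u ≤ -t := by linarith
          _ ≤ |t| := neg_le_abs t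
          _ ≤ ρ := ht
        exact hφρ u this
    have hb := intervalIntegral.norm_integral_le_of_norm_le_const hptw
    rw [hint, sub_zero] at hb
    exact hb
  -- far region
  set K : Set ℝ := Icc (-(1:ℝ)/2) (-ρ) ∪ Icc ρ (1/2) with hK
  have hKcpt : IsCompact K := isCompact_Icc.union isCompact_Icc
  have hKne : K.Nonempty := ⟨ρ, Or.inr ⟨le_rfl, hρhalf⟩⟩
  have h0mem : (0:ℝ) ∈ Ico (0:ℝ) 1 := ⟨le_rfl, by norm_num⟩
  have hcp : ∀ t ∈ K, c t ≠ p := by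
    rintro t (⟨ht1, ht2⟩ | ⟨ht1, ht2⟩) hct
    · have hc1 : c (t + 1) = c 0 := by rw [per t, hct, hp]
      have hmem : t + 1 ∈ Ico (0:ℝ) 1 := ⟨by linarith, by linarith⟩
      have := inj hmem h0mem hc1
      linarith
    · have hmem : t ∈ Ico (0:ℝ) 1 := ⟨by linarith, by linarith⟩
      have := inj hmem h0mem (by rw [hct, hp])
      linarith
  have hwK : ∀ t ∈ K, w t ≠ 0 := fun t ht =>
    div_ne_zero (sub_ne_zero.2 (hcp t ht)) hv0
  obtain ⟨x0, hx0K, hx0min⟩ := hKcpt.exists_isMinOn hKne hwc.norm.continuousOn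
  set dm : ℝ := ‖w x0‖ with hdm
  have hdm0 : 0 < dm := norm_pos_iff.2 (hwK x0 hx0K)
  have hfarw : ∀ t ∈ K, dm ≤ ‖w t‖ := fun t ht => hx0min ht
  -- bound for φ
  have hφper : Function.Periodic φ 1 := fun t => by simp [hφ, deriv_periodic per t]
  obtain ⟨Mφ, hMφ0, hMφ⟩ := periodic_bound hφc hφper
  -- τ and ε
  have hπ3 := Real.pi_gt_three
  have hπpos := Real.pi_pos
  set θ : ℝ := Real.pi/2 - 1/4 with hθ
  have hθpos : 0 < θ := by rw [hθ]; linarith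
  have hθlt : θ < Real.pi/2 := by rw [hθ]; linarith
  set τ : ℝ := Real.tan θ with hτdef
  have hτ0 : 0 < τ := Real.tan_pos_of_pos_of_lt_pi_div_two hθpos hθlt
  have harctanτ : Real.arctan τ = θ := Real.arctan_tan (by linarith) hθlt
  set ε : ℝ := min (min (dm/2) (ρ/τ)) (dm^2/(80*(Mφ+1))) with hεdef
  have hε0 : 0 < ε := lt_min (lt_min (by linarith) (by positivity)) (by positivity)
  have hε1 : ε ≤ dm/2 := le_trans (min_le_left _ _) (min_le_left _ _)
  have hε2 : ε ≤ ρ/τ := le_trans (min_le_left _ _) (min_le_right _ _)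
  have hε3 : ε ≤ dm^2/(80*(Mφ+1)) := min_le_right _ _
  set zp : ℂ := p + (ε:ℂ)*I*v with hzp
  set zm : ℂ := p - (ε:ℂ)*I*v with hzm
  -- z± not in range
  have hkey : ∀ s : ℝ, s ≠ 0 → |s| < dm → (p + (s:ℂ) * I * v) ∉ range c := by
    rintro s hs0 hsdm ⟨t, ht⟩
    obtain ⟨n, hn⟩ := exists_shift t
    have hu : t - (n:ℝ) ∈ Icc (-(1:ℝ)/2) (1/2) := hn
    set u := t - (n:ℝ) with hudef
    have hcu : c u = p + (s:ℂ)*I*v := by rw [shift_eq per t n, ht]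
    have hwu : w u = (s:ℂ) * I := by
      rw [hw]
      simp only []
      rw [hcu]
      field_simp
      ring
    by_cases hcase : |u| ≤ ρ
    · have h1 := hwt u hcase
      rw [hwu] at h1
      have h2 : |u| ≤ ‖(s:ℂ)*I - (u:ℂ)‖ := by
        have h3 := Complex.abs_re_le_norm ((s:ℂ)*I - (u:ℂ))
        have h4 : ((s:ℂ)*I - (u:ℂ)).re = -u := by simp
        rw [h4, abs_neg] at h3
        exact h3
      have hu0 : u = 0 := by
        have h5 := abs_nonneg u
        have : |u| = 0 := by linarith
        exact abs_eq_zero.1 this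
      rw [hu0, hw0] at hwu
      apply hs0
      have h6 : (s:ℂ) = 0 := by
        by_contra h7
        exact (mul_ne_zero h7 Complex.I_ne_zero) hwu.symm
      exact_mod_cast h6
    · push_neg at hcase
      have huK : u ∈ K := by
        rcases le_or_gt u 0 with h | h
        · exact Or.inl ⟨hu.1, by rw [abs_of_nonpos h] at hcase; linarith⟩
        · exact Or.inr ⟨by rw [abs_of_pos h] at hcase; linarith, hu.2⟩
      have h5 := hfarw u huK
      rw [hwu] at h5
      have h6 : ‖(s:ℂ)*I‖ = |s| := by
        rw [norm_mul, Complex.norm_I, mul_one, Complex.norm_real, Real.norm_eq_abs]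
      rw [h6] at h5
      linarith
  have hzpnr : zp ∉ range c := by
    rw [hzp]
    exact hkey ε (ne_of_gt hε0) (by rw [abs_of_pos hε0]; linarith)
  have hzmnr : zm ∉ range c := by
    have heq : zm = p + ((-ε : ℝ):ℂ)*I*v := by rw [hzm]; push_cast; ring
    rw [heq]
    exact hkey (-ε) (by linarith) (by rw [abs_neg, abs_of_pos hε0]; linarith)
    -- denominators
  have hfp : ∀ t : ℝ, w t - (ε:ℂ)*I ≠ 0 := by
    intro t h
    apply hzpnr
    refine ⟨t, ?_⟩
    have h1 : w t = (ε:ℂ)*I := sub_eq_zero.1 h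
    have hct : c t = p + v * w t := by rw [hw]; field_simp; ring
    rw [hct, h1, hzp]; ring
  have hfm : ∀ t : ℝ, w t + (ε:ℂ)*I ≠ 0 := by
    intro t h
    apply hzmnr
    refine ⟨t, ?_⟩
    have h1 : w t = -((ε:ℂ)*I) := by linear_combination h
    have hct : c t = p + v * w t := by rw [hw]; field_simp; ring
    rw [hct, h1, hzm]; ring
  have hdenfac : ∀ t : ℝ, w t^2 + (ε:ℂ)^2 = (w t - (ε:ℂ)*I)*(w t + (ε:ℂ)*I) := by
    intro t
    rw [show (w t - (ε:ℂ)*I)*(w t + (ε:ℂ)*I) = w t^2 - (ε:ℂ)^2*I^2 by ring, Complex.I_sq]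
    ring
  have hden : ∀ t : ℝ, w t^2 + (ε:ℂ)^2 ≠ 0 := fun t => by
    rw [hdenfac t]; exact mul_ne_zero (hfp t) (hfm t)
  set G : ℝ → ℂ := fun t => 2*(ε:ℂ)*I*φ t / (w t^2 + (ε:ℂ)^2) with hG
  have hGc : Continuous G := by
    apply Continuous.div
    · exact continuous_const.mul hφc
    · exact (hwc.pow 2).add continuous_const
    · exact hden
  -- D = ∫ G
  have hDint : wind c zp - wind c zm = ∫ t in (-(1:ℝ)/2)..(1/2), G t := by
    rw [wind, wind, ← intervalIntegral.integral_sub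
      ((F_cont hc hzpnr).intervalIntegrable _ _) ((F_cont hc hzmnr).intervalIntegrable _ _)]
    apply intervalIntegral.integral_congr
    intro t _
    have h1 : c t - zp = v * (w t - (ε:ℂ)*I) := by
      rw [hzp, hw]; field_simp; ring
    have h2 : c t - zm = v * (w t + (ε:ℂ)*I) := by
      rw [hzm, hw]; field_simp; ring
    have h3 : deriv c t = v * φ t := by rw [hφ]; field_simp
    simp only [hG]
    rw [h1, h2, h3, hdenfac t]
    have h4 := hfp t
    have h5 := hfm t
    field_simp
    ring
  have hD0 : (∫ t in (-(1:ℝ)/2)..(1/2), G t) = 0 := by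
    rw [← hDint, wind_zero hc per hP hzpnr, wind_zero hc per hP hzmnr, sub_zero]
  -- splitting
  have hsplit1 : (∫ t in (-(1:ℝ)/2)..(-ρ), G t) + (∫ t in (-ρ:ℝ)..(1/2), G t)
      = ∫ t in (-(1:ℝ)/2)..(1/2), G t :=
    intervalIntegral.integral_add_adjacent_intervals
      (hGc.intervalIntegrable _ _) (hGc.intervalIntegrable _ _)
  have hsplit2 : (∫ t in (-ρ:ℝ)..ρ, G t) + (∫ t in (ρ:ℝ)..(1/2), G t)
      = ∫ t in (-ρ:ℝ)..(1/2), G t :=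
    intervalIntegral.integral_add_adjacent_intervals
      (hGc.intervalIntegrable _ _) (hGc.intervalIntegrable _ _)
  -- the model integrand
  set r : ℝ → ℝ := fun t => 2*ε/(t^2+ε^2) with hr
  have hrc : Continuous r := continuous_const.div
    ((continuous_pow 2).add continuous_const) (fun t => by positivity)
  set g : ℝ → ℂ := fun t => (r t) • (I:ℂ) with hg
  have hgc : Continuous g := hrc.smul continuous_const
  have hrint : (∫ t in (-ρ:ℝ)..ρ, r t) = 4 * Real.arctan (ρ/ε) := by
    have hat : ∀ t : ℝ, HasDerivAt (fun t : ℝ => 2 * Real.arctan (t/ε)) (r t) t := by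
      intro t
      have h1 : HasDerivAt (fun t : ℝ => t/ε) (1/ε) t := by
        simpa using (hasDerivAt_id t).div_const ε
      have h2 := (Real.hasDerivAt_arctan (t/ε)).comp t h1
      have h3 := h2.const_mul (2:ℝ)
      refine h3.congr_deriv ?_
      rw [hr]
      field_simp
      ring
    rw [intervalIntegral.integral_eq_sub_of_hasDerivAt (fun t _ => hat t)
      (hrc.intervalIntegrable _ _)]
    rw [show (-ρ)/ε = -(ρ/ε) by ring, Real.arctan_neg]
    ring
  have hgint : (∫ t in (-ρ:ℝ)..ρ, g t) = (4 * Real.arctan (ρ/ε)) • (I:ℂ) := by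
    rw [hg, intervalIntegral.integral_smul_const, hrint]
  -- middle pointwise bound
  have hmidptw : ∀ t : ℝ, |t| ≤ ρ → ‖G t - g t‖ ≤ (4/7) * r t := by
    intro t ht
    have hq : (0:ℝ) < t^2 + ε^2 := by positivity
    have hTnorm : ‖((t:ℝ):ℂ)‖ = |t| := by rw [Complex.norm_real, Real.norm_eq_abs]
    have h1 : ‖w t - (t:ℂ)‖ ≤ (1/10)*|t| := hwt t ht
    have h2 : ‖w t + (t:ℂ)‖ ≤ (21/10)*|t| := by
      have h3 : w t + (t:ℂ) = (w t - (t:ℂ)) + 2*(t:ℂ) := by ring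
      rw [h3]
      calc ‖(w t - (t:ℂ)) + 2*(t:ℂ)‖ ≤ ‖w t - (t:ℂ)‖ + ‖2*(t:ℂ)‖ := norm_add_le _ _
      _ ≤ (1/10)*|t| + 2*|t| := by
          rw [norm_mul, show ‖(2:ℂ)‖ = 2 by norm_num, hTnorm]
          exact add_le_add h1 le_rfl
      _ = (21/10)*|t| := by ring
    have h3 : ‖w t^2 - ((t:ℂ))^2‖ ≤ (21/100)*t^2 := by
      rw [show w t^2 - ((t:ℂ))^2 = (w t - (t:ℂ))*(w t + (t:ℂ)) by ring, norm_mul]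
      calc ‖w t - (t:ℂ)‖ * ‖w t + (t:ℂ)‖ ≤ ((1/10)*|t|) * ((21/10)*|t|) :=
        mul_le_mul h1 h2 (norm_nonneg _) (by positivity)
      _ = (21/100)*(|t| * |t|) := by ring
      _ = (21/100)*t^2 := by rw [abs_mul_abs_self]; ring
    have hd0eq : ((t:ℂ))^2 + ((ε:ℝ):ℂ)^2 = (((t^2+ε^2 : ℝ)):ℂ) := by push_cast; ring
    have hd0 : ‖((t:ℂ))^2 + ((ε:ℝ):ℂ)^2‖ = t^2 + ε^2 := by
      rw [hd0eq, Complex.norm_real, Real.norm_eq_abs, _root_.abs_of_pos hq]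
    have hd0ne : ((t:ℂ))^2 + ((ε:ℝ):ℂ)^2 ≠ 0 := by
      rw [hd0eq]
      exact_mod_cast ne_of_gt hq
    have ht2q : t^2 ≤ t^2 + ε^2 := by nlinarith
    have hd1 : (7/10)*(t^2+ε^2) ≤ ‖w t^2 + ((ε:ℝ):ℂ)^2‖ := by
      have h4 : ‖((t:ℂ))^2 + ((ε:ℝ):ℂ)^2‖ - ‖((t:ℂ))^2 - w t^2‖ ≤ ‖w t^2 + ((ε:ℝ):ℂ)^2‖ := by
        have h5 := norm_sub_norm_le (((t:ℂ))^2 + ((ε:ℝ):ℂ)^2) (((t:ℂ))^2 - w t^2)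
        have h6 : ((t:ℂ))^2 + ((ε:ℝ):ℂ)^2 - (((t:ℂ))^2 - w t^2) = w t^2 + ((ε:ℝ):ℂ)^2 := by ring
        rw [h6] at h5
        exact h5
      rw [hd0, norm_sub_rev] at h4
      have h7 : ‖w t ^ 2 - ((t:ℂ))^2‖ ≤ (3/10)*(t^2+ε^2) := le_trans h3 (by nlinarith)
      linarith
    have hd1pos : (0:ℝ) < ‖w t^2 + ((ε:ℝ):ℂ)^2‖ := lt_of_lt_of_le (by positivity) hd1
    have hd1ne : w t^2 + ((ε:ℝ):ℂ)^2 ≠ 0 := by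
      intro hcon
      rw [hcon, norm_zero] at hd1pos
      exact lt_irrefl _ hd1pos
    -- decompose difference
    have hgeq : g t = 2*((ε:ℝ):ℂ)*I / (((t:ℂ))^2 + ((ε:ℝ):ℂ)^2) := by
      rw [hg]
      simp only []
      rw [Complex.real_smul, hr]
      push_cast
      rw [div_mul_eq_mul_div]
    have hsplit : G t - g t = 2*((ε:ℝ):ℂ)*I*((φ t - 1)/(w t^2 + ((ε:ℝ):ℂ)^2))
        + 2*((ε:ℝ):ℂ)*I*((((t:ℂ))^2 - w t^2)/((w t^2 + ((ε:ℝ):ℂ)^2)*(((t:ℂ))^2 + ((ε:ℝ):ℂ)^2))) := by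
      rw [hG, hgeq]
      simp only []
      field_simp
      ring
    have hεnorm : ‖((ε:ℝ):ℂ)‖ = ε := by
      rw [Complex.norm_real, Real.norm_eq_abs, _root_.abs_of_pos hε0]
    have hnorm2εI : ‖2*((ε:ℝ):ℂ)*I‖ = 2*ε := by
      rw [norm_mul, norm_mul, Complex.norm_I, mul_one, hεnorm,
        show ‖(2:ℂ)‖ = 2 by norm_num]
    have hA : ‖2*((ε:ℝ):ℂ)*I*((φ t - 1)/(w t^2 + ((ε:ℝ):ℂ)^2))‖ ≤ (1/7) * r t := by
      rw [norm_mul, hnorm2εI, norm_div]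
      have h8 : ‖φ t - 1‖/‖w t^2 + ((ε:ℝ):ℂ)^2‖ ≤ (1/10)/((7/10)*(t^2+ε^2)) :=
        div_le_div₀ (by norm_num) (hφρ t ht) (by positivity) hd1
      calc 2*ε * (‖φ t - 1‖/‖w t^2 + ((ε:ℝ):ℂ)^2‖) ≤ 2*ε * ((1/10)/((7/10)*(t^2+ε^2))) := by
            have hεp : (0:ℝ) ≤ 2*ε := by positivity
            exact mul_le_mul_of_nonneg_left h8 hεp
      _ = (1/7) * r t := by rw [hr]; field_simp
    have hB : ‖2*((ε:ℝ):ℂ)*I*((((t:ℂ))^2 - w t^2)/((w t^2 + ((ε:ℝ):ℂ)^2)*(((t:ℂ))^2 + ((ε:ℝ):ℂ)^2)))‖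
        ≤ (3/7) * r t := by
      rw [norm_mul, hnorm2εI, norm_div, norm_mul, hd0]
      have h9 : ‖((t:ℂ))^2 - w t^2‖ ≤ (3/10)*(t^2+ε^2) := by
        rw [norm_sub_rev]
        exact le_trans h3 (by nlinarith)
      have h10 : ‖((t:ℂ))^2 - w t^2‖/(‖w t^2 + ((ε:ℝ):ℂ)^2‖*(t^2+ε^2))
          ≤ ((3/10)*(t^2+ε^2))/(((7/10)*(t^2+ε^2))*(t^2+ε^2)) := by
        apply div_le_div₀ (by positivity) h9 (by positivity)
        apply mul_le_mul_of_nonneg_right hd1 (le_of_lt hq)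
      calc 2*ε * (‖((t:ℂ))^2 - w t^2‖/(‖w t^2 + ((ε:ℝ):ℂ)^2‖*(t^2+ε^2)))
          ≤ 2*ε * (((3/10)*(t^2+ε^2))/(((7/10)*(t^2+ε^2))*(t^2+ε^2))) := by
            have hεp : (0:ℝ) ≤ 2*ε := by positivity
            exact mul_le_mul_of_nonneg_left h10 hεp
      _ = (3/7) * r t := by rw [hr]; field_simp
    calc ‖G t - g t‖ = ‖_ + _‖ := by rw [hsplit]
    _ ≤ _ + _ := norm_add_le _ _
    _ ≤ (1/7) * r t + (3/7) * r t := add_le_add hA hB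
    _ = (4/7) * r t := by ring
  -- middle bound
  have harc0 : 0 ≤ Real.arctan (ρ/ε) := by
    rw [← Real.arctan_zero]
    exact Real.arctan_strictMono.monotone (by positivity)
  have harcpi : Real.arctan (ρ/ε) < Real.pi/2 := Real.arctan_lt_pi_div_two _
  have hmid : ‖(∫ t in (-ρ:ℝ)..ρ, G t) - (∫ t in (-ρ:ℝ)..ρ, g t)‖ ≤ 8*Real.pi/7 := by
    rw [← intervalIntegral.integral_sub (hGc.intervalIntegrable _ _) (hgc.intervalIntegrable _ _)]
    have hae : ∀ᵐ t ∂(MeasureTheory.volume.restrict (Set.uIoc (-ρ:ℝ) ρ)),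
        ‖G t - g t‖ ≤ (4/7) * r t := by
      rw [MeasureTheory.ae_restrict_iff' measurableSet_uIoc]
      apply MeasureTheory.ae_of_all
      intro t ht
      rw [Set.uIoc_of_le (by linarith : (-ρ:ℝ) ≤ ρ)] at ht
      have : |t| ≤ ρ := abs_le.2 ⟨le_of_lt ht.1, ht.2⟩
      exact hmidptw t this
    have hb := intervalIntegral.norm_integral_le_abs_of_norm_le hae
      ((continuous_const.mul hrc).intervalIntegrable _ _)
    rw [intervalIntegral.integral_const_mul, hrint] at hb
    rw [_root_.abs_of_nonneg (by linarith [harc0] : (0:ℝ) ≤ (4/7) * (4 * Real.arctan (ρ/ε)))] at hb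
    calc ‖∫ t in (-ρ:ℝ)..ρ, (G t - g t)‖ ≤ (4/7) * (4 * Real.arctan (ρ/ε)) := hb
    _ ≤ 8*Real.pi/7 := by nlinarith
  -- far bounds
  have hfarbound : ∀ a b : ℝ, Icc a b ⊆ K → a ≤ b → ‖∫ t in a..b, G t‖ ≤ 1/30 := by
    intro a b hab hle
    have hptw : ∀ t ∈ Set.uIoc a b, ‖G t‖ ≤ 1/30 := by
      intro t ht
      rw [Set.uIoc_of_le hle] at ht
      have htK : t ∈ K := hab ⟨le_of_lt ht.1, ht.2⟩
      have hnorm2εI : ‖2*((ε:ℝ):ℂ)*I‖ = 2*ε := by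
        rw [norm_mul, norm_mul, Complex.norm_I, mul_one, Complex.norm_real,
          Real.norm_eq_abs, _root_.abs_of_pos hε0, show ‖(2:ℂ)‖ = 2 by norm_num]
      have hnum : ‖2*((ε:ℝ):ℂ)*I*φ t‖ ≤ 2*ε*Mφ := by
        rw [norm_mul, hnorm2εI]
        exact mul_le_mul_of_nonneg_left (hMφ t) (by positivity)
      have hden2 : (3/4)*dm^2 ≤ ‖w t^2 + ((ε:ℝ):ℂ)^2‖ := by
        have h5 := norm_sub_norm_le (w t^2) (-(((ε:ℝ):ℂ)^2))
        rw [sub_neg_eq_add, norm_neg] at h5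
        have h6 : ‖w t^2‖ = ‖w t‖^2 := by rw [norm_pow]
        have h7 : ‖((ε:ℝ):ℂ)^2‖ = ε^2 := by
          rw [norm_pow, Complex.norm_real, Real.norm_eq_abs, _root_.abs_of_pos hε0]
        have h8 := hfarw t htK
        have h9 : dm^2 ≤ ‖w t‖^2 := by nlinarith [norm_nonneg (w t)]
        have h10 : ε^2 ≤ dm^2/4 := by nlinarith
        rw [h6, h7] at h5
        linarith
      have hGnorm : ‖G t‖ = ‖2*((ε:ℝ):ℂ)*I*φ t‖/‖w t^2 + ((ε:ℝ):ℂ)^2‖ := by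
        rw [hG]; simp only []; rw [norm_div]
      rw [hGnorm]
      calc ‖2*((ε:ℝ):ℂ)*I*φ t‖/‖w t^2 + ((ε:ℝ):ℂ)^2‖ ≤ (2*ε*Mφ)/((3/4)*dm^2) :=
        div_le_div₀ (by positivity) hnum (by positivity) hden2
      _ ≤ 1/30 := by
          rw [div_le_iff₀ (by positivity)]
          have h11 : ε*(Mφ+1) ≤ dm^2/80 := by
            have := mul_le_mul_of_nonneg_right hε3 (by positivity : (0:ℝ) ≤ Mφ+1)
            calc ε*(Mφ+1) ≤ dm^2/(80*(Mφ+1))*(Mφ+1) := this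
            _ = dm^2/80 := by field_simp
          nlinarith
    have hb := intervalIntegral.norm_integral_le_of_norm_le_const hptw
    have hab1 : |b - a| ≤ 1 := by
      have ha' : a ∈ K := hab ⟨le_rfl, hle⟩
      have hb' : b ∈ K := hab ⟨hle, le_rfl⟩
      have h1 : -(1:ℝ)/2 ≤ a ∧ a ≤ 1/2 := by
        rcases ha' with ⟨h, h'⟩ | ⟨h, h'⟩ <;> constructor <;> linarith
      have h2 : -(1:ℝ)/2 ≤ b ∧ b ≤ 1/2 := by
        rcases hb' with ⟨h, h'⟩ | ⟨h, h'⟩ <;> constructor <;> linarith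
      rw [abs_le]
      constructor <;> linarith [h1.1, h1.2, h2.1, h2.2]
    have h12 : (1/30:ℝ) * |b - a| ≤ 1/30 := by linarith [hab1]
    exact le_trans hb h12
  have hfar1 : ‖∫ t in (-(1:ℝ)/2)..(-ρ), G t‖ ≤ 1/30 := by
    apply hfarbound
    · intro x hx
      exact Or.inl hx
    · linarith
  have hfar3 : ‖∫ t in (ρ:ℝ)..(1/2), G t‖ ≤ 1/30 := by
    apply hfarbound
    · intro x hx
      exact Or.inr hx
    · linarith
  -- model vs 2πI
  have hm2π : ‖(4*Real.arctan (ρ/ε)) • (I:ℂ) - (2*Real.pi) • (I:ℂ)‖ ≤ 1 := by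
    rw [← sub_smul, norm_smul, Complex.norm_I, mul_one, Real.norm_eq_abs]
    have harc2 : θ ≤ Real.arctan (ρ/ε) := by
      rw [← harctanτ]
      apply Real.arctan_strictMono.monotone
      rw [le_div_iff₀ hτ0] at hε2
      rw [le_div_iff₀ hε0]
      nlinarith
    rw [abs_of_nonpos (by nlinarith)]
    rw [hθ] at harc2
    linarith
  -- conclusion
  have hsum : (∫ t in (-(1:ℝ)/2)..(-ρ), G t) + ((∫ t in (-ρ:ℝ)..ρ, G t) + (∫ t in (ρ:ℝ)..(1/2), G t)) = 0 := by
    rw [hsplit2, hsplit1, hD0]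
  set A1 := ∫ t in (-(1:ℝ)/2)..(-ρ), G t
  set A2 := ∫ t in (-ρ:ℝ)..ρ, G t
  set A3 := ∫ t in (ρ:ℝ)..(1/2), G t
  set Ig := (4*Real.arctan (ρ/ε)) • (I:ℂ)
  have hIg : (∫ t in (-ρ:ℝ)..ρ, g t) = Ig := hgint
  have hmid2 : ‖A2 - Ig‖ ≤ 8*Real.pi/7 := by rw [← hIg]; exact hmid
  have hid : (2*Real.pi) • (I:ℂ) = -(A1 + A3 + (A2 - Ig) + (Ig - (2*Real.pi) • (I:ℂ))) := by
    have h := hsum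
    have : A1 + A3 + (A2 - Ig) + (Ig - (2*Real.pi) • (I:ℂ))
        = (A1 + (A2 + A3)) - (2*Real.pi) • (I:ℂ) := by ring
    rw [this, h]
    ring
  have hnorm2pi : ‖(2*Real.pi) • (I:ℂ)‖ = 2*Real.pi := by
    rw [norm_smul, Complex.norm_I, mul_one, Real.norm_eq_abs,
      _root_.abs_of_pos (by positivity)]
  have hfinal : 2*Real.pi ≤ 1/30 + 1/30 + 8*Real.pi/7 + 1 := by
    rw [← hnorm2pi, hid, norm_neg]
    calc ‖A1 + A3 + (A2 - Ig) + (Ig - (2*Real.pi) • (I:ℂ))‖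
        ≤ ‖A1 + A3 + (A2 - Ig)‖ + ‖Ig - (2*Real.pi) • (I:ℂ)‖ := norm_add_le _ _
    _ ≤ (‖A1 + A3‖ + ‖A2 - Ig‖) + ‖Ig - (2*Real.pi) • (I:ℂ)‖ := by
        gcongr
        exact norm_add_le _ _
    _ ≤ ((‖A1‖ + ‖A3‖) + ‖A2 - Ig‖) + ‖Ig - (2*Real.pi) • (I:ℂ)‖ := by
        gcongr
        exact norm_add_le _ _
    _ ≤ ((1/30 + 1/30) + 8*Real.pi/7) + 1 := by
        gcongr
    _ = 1/30 + 1/30 + 8*Real.pi/7 + 1 := by ring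
  nlinarith

end JordanCurveAux

theorem SimpleClosedCurve.not_preconnected_compl (δ : SimpleClosedCurve) :
    ¬ IsPreconnected δ.imageᶜ := by
  intro hP
  set L : (ℝ × ℝ) →L[ℝ] ℂ := Complex.equivRealProdCLM.symm.toContinuousLinearMap with hL
  set c : ℝ → ℂ := fun t => L (δ.toFun t) with hc
  have hinjL : Function.Injective L := Complex.equivRealProdCLM.symm.injective
  have hcd : ContDiff ℝ 1 c := L.contDiff.comp δ.contDiff
  have hda : ∀ t, HasDerivAt c (L (deriv δ.toFun t)) t := fun t =>
    L.hasFDerivAt.comp_hasDerivAt t (δ.contDiff.differentiable one_ne_zero t).hasDerivAt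
  have hdc : ∀ t, deriv c t = L (deriv δ.toFun t) := fun t => (hda t).deriv
  have hdne : ∀ t, deriv c t ≠ 0 := by
    intro t h
    rw [hdc t] at h
    have : L (deriv δ.toFun t) = L 0 := by rw [h, map_zero]
    exact δ.deriv_ne t (hinjL this)
  have hper : Function.Periodic c 1 := fun t => by
    simp only [hc]
    rw [δ.periodic t]
  have hinj : Set.InjOn c (Ico 0 1) := fun a ha b hb hab =>
    δ.injOn ha hb (hinjL hab)
  have hrange : Set.range c = L '' δ.image := by
    rw [SimpleClosedCurve.image, ← Set.range_comp]
    rfl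
  have hbij : Function.Bijective L := Complex.equivRealProdCLM.symm.bijective
  have hcompl : (Set.range c)ᶜ = L '' (δ.imageᶜ) := by
    rw [hrange, ← Set.image_compl_eq hbij]
  have hPim : IsPreconnected (Set.range c)ᶜ := by
    rw [hcompl]
    exact hP.image _ L.continuous.continuousOn
  exact JordanCurveAux.noJordan hcd hper hdne hinj hPim

/-- Crossing number is additive under connected sum: if `γ` is composite, witnessed by a
simple closed curve `δ` meeting `γ` in the single non-crossing point `γ(t₀)`, and
`γ₁`, `γ₂` are the components `γ|[0,t₀]`, `γ|[t₀,1]` reparametrized to `[0,1]`,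
then `c(γ) = c(γ₁) + c(γ₂)`. -/
theorem crossingNumber_connectedSum (γ γ₁ γ₂ : PlaneCurve) (δ : SimpleClosedCurve)
    (t₀ : ℝ) (ht₀ : t₀ ∈ Icc (0:ℝ) 1)
    (hmeet : δ.image ∩ γ.image = {γ.toFun t₀})
    (hnc : γ.toFun t₀ ∉ γ.crossings)
    (htrans : ∀ s ∈ Icc (0:ℝ) 1, ∀ u : ℝ, γ.toFun s = γ.toFun t₀ → δ.toFun u = γ.toFun t₀ →
      LinearIndependent ℝ ![deriv δ.toFun u, deriv γ.toFun s])
    (hsep : ∀ x ∉ δ.image, ∃ q ∈ γ.crossings, q ∈ connectedComponentIn δ.imageᶜ x)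
    (h₁ : γ₁.toFun = fun s => γ.toFun (t₀ * s))
    (h₂ : γ₂.toFun = fun s => γ.toFun (t₀ + (1 - t₀) * s)) :
    γ.crossingNumber = γ₁.crossingNumber + γ₂.crossingNumber := by
    -- t₀ is interior
  have ht00 : t₀ ≠ 0 := by
    intro h
    apply γ₁.ends_ne
    have e0 : γ₁.toFun 0 = γ.toFun 0 := by rw [h₁]; norm_num
    have e1 : γ₁.toFun 1 = γ.toFun t₀ := by rw [h₁]; norm_num
    rw [e0, e1, h]
  have ht01 : t₀ ≠ 1 := by
    intro h
    apply γ₂.ends_ne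
    have e0 : γ₂.toFun 0 = γ.toFun t₀ := by rw [h₂]; norm_num
    have e1 : γ₂.toFun 1 = γ.toFun 1 := by rw [h₂]; norm_num
    rw [e0, e1, h]
  have ht0pos : 0 < t₀ := lt_of_le_of_ne ht₀.1 (Ne.symm ht00)
  have ht0lt : t₀ < 1 := lt_of_le_of_ne ht₀.2 ht01
  -- characterization of component crossings
  have hX1 : γ₁.crossings = {p : ℝ × ℝ | ∃ s ∈ Icc (0:ℝ) t₀, ∃ t ∈ Icc (0:ℝ) t₀,
      s ≠ t ∧ γ.toFun s = p ∧ γ.toFun t = p} := by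
    ext q
    constructor
    · rintro ⟨s, hs, t, ht, hst, hs1, ht1⟩
      refine ⟨t₀*s, ⟨mul_nonneg ht0pos.le hs.1, by nlinarith [hs.2]⟩, t₀*t,
        ⟨mul_nonneg ht0pos.le ht.1, by nlinarith [ht.2]⟩,
        fun h => hst (mul_left_cancel₀ ht00 h), ?_, ?_⟩
      · rw [← hs1, h₁]
      · rw [← ht1, h₁]
    · rintro ⟨s, hs, t, ht, hst, hs1, ht1⟩
      refine ⟨s/t₀, ⟨div_nonneg hs.1 ht0pos.le, (div_le_one ht0pos).2 hs.2⟩,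
        t/t₀, ⟨div_nonneg ht.1 ht0pos.le, (div_le_one ht0pos).2 ht.2⟩,
        ?_, ?_, ?_⟩
      · intro h
        apply hst
        field_simp at h
        exact h
      · rw [h₁]
        simp only []
        rw [mul_comm, div_mul_cancel₀ s ht00]
        exact hs1
      · rw [h₁]
        simp only []
        rw [mul_comm, div_mul_cancel₀ t ht00]
        exact ht1
  have h1t0 : (1:ℝ) - t₀ ≠ 0 := by intro h; apply ht01; linarith
  have h1t0pos : 0 < 1 - t₀ := by linarith
  have hX2 : γ₂.crossings = {p : ℝ × ℝ | ∃ s ∈ Icc t₀ (1:ℝ), ∃ t ∈ Icc t₀ (1:ℝ),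
      s ≠ t ∧ γ.toFun s = p ∧ γ.toFun t = p} := by
    ext q
    constructor
    · rintro ⟨s, hs, t, ht, hst, hs1, ht1⟩
      refine ⟨t₀ + (1-t₀)*s, ⟨by nlinarith [hs.1], by nlinarith [hs.2]⟩,
        t₀ + (1-t₀)*t, ⟨by nlinarith [ht.1], by nlinarith [ht.2]⟩,
        fun h => hst (mul_left_cancel₀ h1t0 (by linarith)), ?_, ?_⟩
      · rw [← hs1, h₂]
      · rw [← ht1, h₂]
    · rintro ⟨s, hs, t, ht, hst, hs1, ht1⟩
      refine ⟨(s-t₀)/(1-t₀), ⟨div_nonneg (by linarith [hs.1]) h1t0pos.le,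
          (div_le_one h1t0pos).2 (by linarith [hs.2])⟩,
        (t-t₀)/(1-t₀), ⟨div_nonneg (by linarith [ht.1]) h1t0pos.le,
          (div_le_one h1t0pos).2 (by linarith [ht.2])⟩, ?_, ?_, ?_⟩
      · intro h
        apply hst
        field_simp at h
        linarith
      · rw [h₂]
        simp only []
        rw [mul_comm, div_mul_cancel₀ (s-t₀) h1t0]
        rw [show t₀ + (s - t₀) = s by ring]
        exact hs1
      · rw [h₂]
        simp only []
        rw [mul_comm, div_mul_cancel₀ (t-t₀) h1t0]
        rw [show t₀ + (t - t₀) = t by ring]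
        exact ht1
  -- preimages of crossings avoid t₀
  have hnt : ∀ q ∈ γ.crossings, ∀ s ∈ Icc (0:ℝ) 1, γ.toFun s = q → s ≠ t₀ := by
    intro q hq s _ h h'
    apply hnc
    rw [← h', h]
    exact hq
  -- the curve leaves δ except at t₀
  have hnotin : ∀ u ∈ Icc (0:ℝ) 1, u ≠ t₀ → γ.toFun u ∉ δ.image := by
    intro u hu hne hmem
    have hin : γ.toFun u ∈ δ.image ∩ γ.image := ⟨hmem, ⟨u, hu, rfl⟩⟩
    rw [hmeet, mem_singleton_iff] at hin
    exact hnc ⟨u, hu, t₀, ht₀, hne, hin, rfl⟩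
  have hcont : Continuous γ.toFun := γ.contDiff.continuous
  have himg1 : γ.toFun '' Ico 0 t₀ ⊆ δ.imageᶜ := by
    rintro _ ⟨u, hu, rfl⟩
    exact hnotin u ⟨hu.1, le_trans hu.2.le ht0lt.le⟩ (ne_of_lt hu.2)
  have himg2 : γ.toFun '' Ioc t₀ 1 ⊆ δ.imageᶜ := by
    rintro _ ⟨u, hu, rfl⟩
    exact hnotin u ⟨le_trans ht0pos.le hu.1.le, hu.2⟩ (ne_of_gt hu.1)
  have hpre1 : IsPreconnected (γ.toFun '' Ico 0 t₀) :=
    isPreconnected_Ico.image _ hcont.continuousOn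
  have hpre2 : IsPreconnected (γ.toFun '' Ioc t₀ 1) :=
    isPreconnected_Ioc.image _ hcont.continuousOn
  -- no mixed identifications
  have hmixed : ∀ a b : ℝ, 0 ≤ a → a < t₀ → t₀ < b → b ≤ 1 → γ.toFun a = γ.toFun b → False := by
    intro a b ha hat htb hb1 hab
    set x := γ.toFun a with hx
    have hx1 : x ∈ γ.toFun '' Ico 0 t₀ := ⟨a, ⟨ha, hat⟩, rfl⟩
    have hx2 : x ∈ γ.toFun '' Ioc t₀ 1 := ⟨b, ⟨htb, hb1⟩, hab.symm⟩
    have hC1 : γ.toFun '' Ico 0 t₀ ⊆ connectedComponentIn δ.imageᶜ x :=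
      hpre1.subset_connectedComponentIn hx1 himg1
    have hC2 : γ.toFun '' Ioc t₀ 1 ⊆ connectedComponentIn δ.imageᶜ x :=
      hpre2.subset_connectedComponentIn hx2 himg2
    have hcrossC : ∀ q ∈ γ.crossings, q ∈ connectedComponentIn δ.imageᶜ x := by
      intro q hq
      obtain ⟨s, hs, t, ht, hst, h1, h2⟩ := hq
      have hsne := hnt q ⟨s, hs, t, ht, hst, h1, h2⟩ s hs h1
      rcases lt_or_gt_of_ne hsne with hlt | hgt
      · exact hC1 ⟨s, ⟨hs.1, hlt⟩, h1⟩
      · exact hC2 ⟨s, ⟨hgt, hs.2⟩, h1⟩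
    have hFsub : δ.imageᶜ ⊆ connectedComponentIn δ.imageᶜ x := by
      intro y hy
      obtain ⟨q, hq, hqy⟩ := hsep y hy
      have h3 : connectedComponentIn δ.imageᶜ y = connectedComponentIn δ.imageᶜ q :=
        connectedComponentIn_eq hqy
      have h4 : connectedComponentIn δ.imageᶜ x = connectedComponentIn δ.imageᶜ q :=
        connectedComponentIn_eq (hcrossC q hq)
      have h5 : y ∈ connectedComponentIn δ.imageᶜ y := mem_connectedComponentIn hy
      rw [h3, ← h4] at h5
      exact h5
    have hFeq : δ.imageᶜ = connectedComponentIn δ.imageᶜ x :=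
      subset_antisymm hFsub (connectedComponentIn_subset _ _)
    have hFpre : IsPreconnected δ.imageᶜ := by
      rw [hFeq]
      exact isPreconnected_connectedComponentIn
    exact SimpleClosedCurve.not_preconnected_compl δ hFpre
  -- crossings split
  have hcover : γ.crossings = γ₁.crossings ∪ γ₂.crossings := by
    apply subset_antisymm
    · rintro q ⟨s, hs, t, ht, hst, h1, h2⟩
      have hq : q ∈ γ.crossings := ⟨s, hs, t, ht, hst, h1, h2⟩
      have hsne := hnt q hq s hs h1
      have htne := hnt q hq t ht h2
      rcases lt_or_gt_of_ne hsne with hslt | hsgt <;>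
        rcases lt_or_gt_of_ne htne with htlt | htgt
      · left; rw [hX1]; exact ⟨s, ⟨hs.1, hslt.le⟩, t, ⟨ht.1, htlt.le⟩, hst, h1, h2⟩
      · exact absurd (h1.trans h2.symm) (fun h => hmixed s t hs.1 hslt htgt ht.2 h)
      · exact absurd (h2.trans h1.symm) (fun h => hmixed t s ht.1 htlt hsgt hs.2 h)
      · right; rw [hX2]; exact ⟨s, ⟨hsgt.le, hs.2⟩, t, ⟨htgt.le, ht.2⟩, hst, h1, h2⟩
    · rintro q (hq | hq)
      · rw [hX1] at hq
        obtain ⟨s, hs, t, ht, hst, h1, h2⟩ := hq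
        exact ⟨s, ⟨hs.1, hs.2.trans ht₀.2⟩, t, ⟨ht.1, ht.2.trans ht₀.2⟩, hst, h1, h2⟩
      · rw [hX2] at hq
        obtain ⟨s, hs, t, ht, hst, h1, h2⟩ := hq
        exact ⟨s, ⟨le_trans ht₀.1 hs.1, hs.2⟩, t, ⟨le_trans ht₀.1 ht.1, ht.2⟩, hst, h1, h2⟩
  -- disjointness
  have hdisj : Disjoint γ₁.crossings γ₂.crossings := by
    rw [Set.disjoint_left]
    intro q hq1 hq2
    rw [hX1] at hq1
    rw [hX2] at hq2
    obtain ⟨a, ha, b, hb, hab, ha1, hb1⟩ := hq1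
    obtain ⟨u, hu, v', hv', huv, hu1, hv1⟩ := hq2
    have hqX : q ∈ γ.crossings :=
      ⟨a, ⟨ha.1, ha.2.trans ht₀.2⟩, b, ⟨hb.1, hb.2.trans ht₀.2⟩, hab, ha1, hb1⟩
    have hane : a ≠ t₀ := hnt q hqX a ⟨ha.1, ha.2.trans ht₀.2⟩ ha1
    have hune : u ≠ t₀ := hnt q hqX u ⟨le_trans ht₀.1 hu.1, hu.2⟩ hu1
    have halt : a < t₀ := lt_of_le_of_ne ha.2 hane
    have hugt : t₀ < u := lt_of_le_of_ne hu.1 (Ne.symm hune)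
    exact hmixed a u ha.1 halt hugt hu.2 (ha1.trans hu1.symm)
  -- conclude
  rw [PlaneCurve.crossingNumber, PlaneCurve.crossingNumber, PlaneCurve.crossingNumber, hcover]
  exact Set.ncard_union_eq hdisj γ₁.multi_finite γ₂.multi_finite
end

section
/- For every integer m ≥ 1 there exists a plane curve γ with crossing number c(γ) = 2m and distance d(γ) = m. Consequently, any function f : ℕ → ℕ satisfying d(γ) ≤ f(c(γ)) for all plane curves γ must satisfy f(2m) ≥ m for every m ≥ 1. -/
open Set

noncomputable section Spiral
open Complex

def gf (x : ℝ) : ℝ := x + Real.cos (Real.pi * x)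
def lf (x : ℝ) : ℂ := (2 * Real.pi * gf x : ℝ) + (2 * Real.pi * x : ℝ) * Complex.I
def cpt (x : ℝ) : ℂ := Complex.exp (lf x)
def gd (x : ℝ) : ℝ := 1 - Real.pi * Real.sin (Real.pi * x)
def ld (x : ℝ) : ℂ := (2 * Real.pi * gd x : ℝ) + (2 * Real.pi : ℝ) * Complex.I
def vecOf (z : ℂ) : ℝ × ℝ := (z.re, z.im)
def xm (m : ℕ) (t : ℝ) : ℝ := -(2/3) + (2*m+1) * t
def cur (m : ℕ) (t : ℝ) : ℝ × ℝ := vecOf (cpt (xm m t))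
lemma cpt_ne_zero (x : ℝ) : cpt x ≠ 0 := Complex.exp_ne_zero _

lemma abs_cpt (x : ℝ) : ‖cpt x‖ = Real.exp (2 * Real.pi * gf x) := by
  rw [cpt, Complex.norm_exp]; congr 1
  simp [lf]

lemma cos_pi_add_int (x : ℝ) (n : ℤ) :
    Real.cos (Real.pi * (x + n)) = (-1)^n * Real.cos (Real.pi * x) := by
  have : Real.pi * (x + n) = Real.pi * x + n * Real.pi := by ring
  rw [this]
  exact_mod_cast Real.cos_add_int_mul_pi (Real.pi * x) n

lemma gf_shift (x : ℝ) (n : ℤ) : gf (x + n) = gf x + n + ((-1)^n - 1) * Real.cos (Real.pi * x) := by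
  simp only [gf, cos_pi_add_int]
  ring

/-- characterization of equal points -/
lemma cpt_eq_iff (x y : ℝ) : cpt x = cpt y ↔ ∃ n : ℤ, x = y + n ∧ gf x = gf y := by
  rw [cpt, cpt, Complex.exp_eq_exp_iff_exists_int]
  constructor
  · rintro ⟨n, hn⟩
    have hre := congrArg Complex.re hn
    have him := congrArg Complex.im hn
    simp [lf] at hre him
    have hpi := Real.pi_pos
    refine ⟨n, ?_, ?_⟩
    · nlinarith [him]
    · exact hre
  · rintro ⟨n, hxy, hg⟩
    refine ⟨n, ?_⟩
    apply Complex.ext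
    · simp [lf]
      exact hg
    · simp [lf, hxy]
      ring

lemma gf_eq_shift_iff (x : ℝ) (n : ℤ) :
    gf (x + n) = gf x ↔ (n = 0 ∨ (n = 1 ∧ Real.cos (Real.pi * x) = 1/2)
      ∨ (n = -1 ∧ Real.cos (Real.pi * x) = -(1/2))) := by
  rw [gf_shift]
  rcases Int.even_or_odd n with he | ho
  · have : (-1 : ℝ)^n = 1 := he.neg_one_zpow
    rw [this]
    constructor
    · intro h
      left
      have : (n : ℝ) = 0 := by linarith
      exact_mod_cast this
    · rintro (rfl | ⟨rfl, _⟩ | ⟨rfl, _⟩) <;> simp_all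
  · have : (-1 : ℝ)^n = -1 := ho.neg_one_zpow
    rw [this]
    have hcos := Real.neg_one_le_cos (Real.pi * x)
    have hcos' := Real.cos_le_one (Real.pi * x)
    constructor
    · intro h
      have hn : (n : ℝ) = 2 * Real.cos (Real.pi * x) := by linarith
      have h1 : (n : ℝ) ≤ 2 := by linarith
      have h2 : (-2 : ℝ) ≤ n := by linarith
      have h1' : n ≤ 2 := by exact_mod_cast h1
      have h2' : (-2 : ℤ) ≤ n := by exact_mod_cast h2
      have hn1 : n = 1 ∨ n = -1 := by rcases ho with ⟨k, hk⟩; omega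
      rcases hn1 with rfl | rfl
      · right; left; refine ⟨rfl, ?_⟩; push_cast at hn; linarith
      · right; right; refine ⟨rfl, ?_⟩; push_cast at hn; linarith
    · rintro (rfl | ⟨rfl, hc⟩ | ⟨rfl, hc⟩)
      · exfalso; rcases ho with ⟨k, hk⟩; omega
      · rw [hc]; push_cast; ring
      · rw [hc]; push_cast; ring

lemma cos_pi_eq_half_iff (x : ℝ) :
    Real.cos (Real.pi * x) = 1/2 ↔ ∃ k : ℤ, x = 1/3 + 2*k ∨ x = -(1/3) + 2*k := by
  have hpi := Real.pi_pos
  have h3 : Real.cos (Real.pi * (1/3)) = 1/2 := by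
    rw [show Real.pi * (1/3) = Real.pi / 3 by ring, Real.cos_pi_div_three]
  constructor
  · intro h
    have : Real.cos (Real.pi * x) - Real.cos (Real.pi * (1/3)) = 0 := by rw [h, h3]; ring
    rw [Real.cos_sub_cos] at this
    have : Real.sin ((Real.pi * x + Real.pi * (1/3)) / 2) = 0 ∨
        Real.sin ((Real.pi * x - Real.pi * (1/3)) / 2) = 0 := by
      rcases mul_eq_zero.1 this with h' | h'
      · left; rcases mul_eq_zero.1 h' with h'' | h''
        · norm_num at h''
        · exact h''
      · right; exact h'
    rcases this with h' | h'
    · rw [Real.sin_eq_zero_iff] at h'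
      obtain ⟨n, hn⟩ := h'
      refine ⟨n, Or.inr ?_⟩
      nlinarith
    · rw [Real.sin_eq_zero_iff] at h'
      obtain ⟨n, hn⟩ := h'
      refine ⟨n, Or.inl ?_⟩
      nlinarith
  · rintro ⟨k, rfl | rfl⟩
    · have : Real.pi * (1/3 + 2*k) = Real.pi/3 + k * (2 * Real.pi) := by ring
      rw [this, Real.cos_add_int_mul_two_pi, Real.cos_pi_div_three]
    · have : Real.pi * (-(1/3) + 2*k) = -(Real.pi/3) + k * (2 * Real.pi) := by ring
      rw [this, Real.cos_add_int_mul_two_pi, Real.cos_neg, Real.cos_pi_div_three]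

lemma hasDerivAt_gf (x : ℝ) : HasDerivAt gf (gd x) x := by
  have h1 : HasDerivAt (fun x : ℝ => Real.pi * x) (Real.pi) x := by
    simpa using (hasDerivAt_id x).const_mul Real.pi
  have h2 : HasDerivAt (fun x : ℝ => Real.cos (Real.pi * x))
      (-Real.sin (Real.pi * x) * Real.pi) x := (Real.hasDerivAt_cos _).comp x h1
  have := (hasDerivAt_id x).add h2
  have hg : gf = fun x => x + Real.cos (Real.pi * x) := rfl
  rw [hg, gd]
  exact this.congr_deriv (by ring)

lemma hasDerivAt_lf (x : ℝ) : HasDerivAt lf (ld x) x := by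
  have h1 : HasDerivAt (fun x : ℝ => ((2 * Real.pi * gf x : ℝ) : ℂ))
      ((2 * Real.pi * gd x : ℝ) : ℂ) x := by
    have : HasDerivAt (fun x : ℝ => 2 * Real.pi * gf x) (2 * Real.pi * gd x) x :=
      (hasDerivAt_gf x).const_mul (2 * Real.pi)
    exact this.ofReal_comp
  have h2 : HasDerivAt (fun x : ℝ => ((2 * Real.pi * x : ℝ) : ℂ) * Complex.I)
      (((2 * Real.pi : ℝ) : ℂ) * Complex.I) x := by
    have : HasDerivAt (fun x : ℝ => 2 * Real.pi * x) (2 * Real.pi) x := by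
      simpa using (hasDerivAt_id x).const_mul (2 * Real.pi)
    exact this.ofReal_comp.mul_const Complex.I
  have hl : lf = fun x => ((2 * Real.pi * gf x : ℝ) : ℂ) + ((2 * Real.pi * x : ℝ) : ℂ) * Complex.I := rfl
  rw [hl, ld]
  exact h1.add h2

lemma hasDerivAt_cpt (x : ℝ) : HasDerivAt cpt (cpt x * ld x) x :=
  (hasDerivAt_lf x).cexp

lemma ld_ne_zero (x : ℝ) : ld x ≠ 0 := by
  intro h
  have := congrArg Complex.im h
  simp [ld] at this

lemma contDiff_cpt : ContDiff ℝ 1 cpt := by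
  have hgf : ContDiff ℝ 1 gf := by
    apply contDiff_id.add
    exact (Real.contDiff_cos).comp (contDiff_const.mul contDiff_id)
  have hlf : ContDiff ℝ 1 lf := by
    apply ContDiff.add
    · exact Complex.ofRealCLM.contDiff.comp (contDiff_const.mul hgf)
    · exact (Complex.ofRealCLM.contDiff.comp (contDiff_const.mul contDiff_id)).mul contDiff_const
  exact Complex.contDiff_exp.comp hlf

/-- determinant criterion for linear independence in ℝ² -/
lemma li_of_det {v w : ℝ × ℝ} (h : v.1 * w.2 - v.2 * w.1 ≠ 0) :
    LinearIndependent ℝ ![v, w] := by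
  rw [LinearIndependent.pair_iff]
  intro s t hst
  have h1 : s * v.1 + t * w.1 = 0 := congrArg Prod.fst hst
  have h2 : s * v.2 + t * w.2 = 0 := congrArg Prod.snd hst
  constructor
  · by_contra hs
    apply h
    have hv1 : v.1 = -(t/s) * w.1 := by field_simp; linarith
    have hv2 : v.2 = -(t/s) * w.2 := by field_simp; linarith
    rw [hv1, hv2]; ring
  · by_contra ht
    apply h
    have hw1 : w.1 = -(s/t) * v.1 := by field_simp; linarith
    have hw2 : w.2 = -(s/t) * v.2 := by field_simp; linarith
    rw [hw1, hw2]; ring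

/-- complex determinant version -/
lemma li_of_det_c {v w : ℂ} (h : v.re * w.im - v.im * w.re ≠ 0) :
    LinearIndependent ℝ ![(v.re, v.im), (w.re, w.im)] := li_of_det h

lemma vecOf_inj : Function.Injective vecOf := by
  intro a b h
  have h1 := congrArg Prod.fst h
  have h2 := congrArg Prod.snd h
  exact Complex.ext h1 h2

lemma xm_inj (m : ℕ) : Function.Injective (xm m) := by
  intro a b h
  have hm : (2*(m:ℝ)+1) ≠ 0 := by positivity
  simp only [xm] at h
  have := add_left_cancel h
  exact mul_left_cancel₀ hm this

lemma xm_mem_iff (m : ℕ) (t : ℝ) :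
    xm m t ∈ Icc (-(2/3) : ℝ) (2*m + 1/3) ↔ t ∈ Icc (0:ℝ) 1 := by
  have hm : (0:ℝ) < 2*m+1 := by positivity
  simp only [xm, mem_Icc]
  constructor
  · rintro ⟨h1, h2⟩
    constructor <;> nlinarith
  · rintro ⟨h1, h2⟩
    constructor <;> nlinarith

lemma cur_eq_iff (m : ℕ) (s t : ℝ) : cur m s = cur m t ↔ cpt (xm m s) = cpt (xm m t) :=
  ⟨fun h => vecOf_inj h, fun h => by rw [cur, cur, h]⟩

lemma hasDerivAt_xm (m : ℕ) (t : ℝ) : HasDerivAt (xm m) (2*m+1) t := by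
  exact (((hasDerivAt_id t).const_mul (2*(m:ℝ)+1)).const_add (-(2/3) : ℝ)).congr_deriv (by simp)

lemma hasDerivAt_cur (m : ℕ) (t : ℝ) :
    HasDerivAt (cur m) (vecOf ((2*m+1) * (cpt (xm m t) * ld (xm m t)))) t := by
  have h1 : HasDerivAt (fun t => cpt (xm m t))
      ((2*(m:ℝ)+1) • (cpt (xm m t) * ld (xm m t))) t :=
    (hasDerivAt_cpt (xm m t)).scomp t (hasDerivAt_xm m t)
  have h2 : HasFDerivAt (⇑Complex.equivRealProdCLM)
      (Complex.equivRealProdCLM : ℂ →L[ℝ] ℝ × ℝ) (cpt (xm m t)) :=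
    Complex.equivRealProdCLM.toContinuousLinearMap.hasFDerivAt
  have h3 := h2.comp_hasDerivAt t h1
  have : (Complex.equivRealProdCLM : ℂ →L[ℝ] ℝ × ℝ) ((2*(m:ℝ)+1) • (cpt (xm m t) * ld (xm m t)))
      = vecOf ((2*m+1) * (cpt (xm m t) * ld (xm m t))) := by
    simp [vecOf, Complex.equivRealProdCLM_apply]
  rw [this] at h3
  exact h3

lemma deriv_cur (m : ℕ) (t : ℝ) :
    deriv (cur m) t = vecOf ((2*m+1) * (cpt (xm m t) * ld (xm m t))) :=
  (hasDerivAt_cur m t).deriv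

lemma contDiff_cur (m : ℕ) : ContDiff ℝ 1 (cur m) := by
  have h1 : ContDiff ℝ 1 (xm m) := by
    apply ContDiff.add contDiff_const
    exact contDiff_const.mul contDiff_id
  have h2 : ContDiff ℝ 1 fun t => cpt (xm m t) := contDiff_cpt.comp h1
  exact (Complex.equivRealProdCLM.toContinuousLinearMap.contDiff).comp h2

lemma deriv_cur_ne (m : ℕ) (t : ℝ) : deriv (cur m) t ≠ 0 := by
  rw [deriv_cur]
  intro h
  have : ((2*m+1 : ℂ) * (cpt (xm m t) * ld (xm m t))) = 0 := by
    apply vecOf_inj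
    simpa [vecOf] using h
  rcases mul_eq_zero.1 this with h' | h'
  · have : (2*(m:ℝ)+1) ≠ 0 := by positivity
    rw [show ((2*m+1 : ℂ)) = ((2*(m:ℝ)+1 : ℝ) : ℂ) by push_cast; ring] at h'
    exact this (by exact_mod_cast h')
  · rcases mul_eq_zero.1 h' with h'' | h''
    · exact cpt_ne_zero _ h''
    · exact ld_ne_zero _ h''

/-- the determinant identity for products -/
lemma det_mul (z u v : ℂ) :
    (z*u).re * (z*v).im - (z*u).im * (z*v).re
      = Complex.normSq z * (u.re * v.im - u.im * v.re) := by
  simp [Complex.mul_re, Complex.mul_im, Complex.normSq_apply]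
  ring

lemma det_ld (x y : ℝ) :
    (ld x).re * (ld y).im - (ld x).im * (ld y).re = 4 * Real.pi^2 * (gd x - gd y) := by
  simp [ld]
  ring

/-- node parameters -/
def nxx (j : ℕ) : ℝ := if Even j then -(1/3) + j else (j : ℝ) - 2/3

lemma nxx_def (j : ℕ) : nxx j = if Even j then (-(1/3) + j : ℝ) else (j : ℝ) - 2/3 := rfl

lemma nxx_bounds (j : ℕ) : (j : ℝ) - 2/3 ≤ nxx j ∧ nxx j ≤ (j : ℝ) - 1/3 := by
  unfold nxx; split <;> constructor <;> push_cast <;> linarith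

lemma cos_nxx (j : ℕ) : Real.cos (Real.pi * nxx j) = 1/2 := by
  rw [cos_pi_eq_half_iff]
  unfold nxx
  rcases Nat.even_or_odd j with he | ho
  · obtain ⟨k, hk⟩ := he
    refine ⟨k, Or.inr ?_⟩
    subst hk
    rw [if_pos ⟨k, rfl⟩]
    push_cast; ring
  · obtain ⟨k, hk⟩ := ho
    refine ⟨k, Or.inl ?_⟩
    subst hk
    have hne : ¬ Even (2*k+1) := by simp [Nat.even_iff]
    rw [if_neg hne]
    push_cast; ring

lemma gf_nxx (j : ℕ) : gf (nxx j) = nxx j + 1/2 := by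
  rw [gf, cos_nxx]

lemma cpt_nxx_succ (j : ℕ) : cpt (nxx j + 1) = cpt (nxx j) := by
  rw [cpt_eq_iff]
  refine ⟨1, by push_cast; ring, ?_⟩
  have := (gf_eq_shift_iff (nxx j) 1).2 (Or.inr (Or.inl ⟨rfl, cos_nxx j⟩))
  simpa using this

/-- node points in the plane -/
def nodePt (j : ℕ) : ℝ × ℝ := vecOf (cpt (nxx j))

lemma nodePt_inj : Function.Injective nodePt := by
  intro a b h
  by_contra hab
  wlog hlt : a < b generalizing a b
  · exact this h.symm (Ne.symm hab) (by omega)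
  have h1 : ‖cpt (nxx a)‖ = ‖cpt (nxx b)‖ := by
    have := vecOf_inj h
    rw [this]
  rw [abs_cpt, abs_cpt] at h1
  have h2 : gf (nxx a) = gf (nxx b) := by
    have := Real.exp_injective h1
    have hpi := Real.pi_pos
    nlinarith
  rw [gf_nxx, gf_nxx] at h2
  have ha := nxx_bounds a
  have hb := nxx_bounds b
  have : (a : ℝ) + 1 ≤ b := by exact_mod_cast Nat.succ_le_of_lt hlt
  linarith [ha.1, ha.2, hb.1, hb.2]

/-- the inverse parameter map -/
def invx (m : ℕ) (x : ℝ) : ℝ := (x + 2/3) / (2*m+1)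

lemma xm_invx (m : ℕ) (x : ℝ) : xm m (invx m x) = x := by
  have hm : (2*(m:ℝ)+1) ≠ 0 := by positivity
  simp only [xm, invx]
  field_simp
  ring

lemma nxx_mem (m : ℕ) {j : ℕ} (hj : j < 2*m) :
    nxx j ∈ Icc (-(2/3) : ℝ) (2*m + 1/3) ∧ nxx j + 1 ∈ Icc (-(2/3) : ℝ) (2*m + 1/3) := by
  obtain ⟨hb1, hb2⟩ := nxx_bounds j
  have : (j : ℝ) ≤ 2*m - 1 := by
    have : (j : ℝ) + 1 ≤ 2*m := by exact_mod_cast Nat.succ_le_of_lt hj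
    linarith
  refine ⟨⟨?_, ?_⟩, ⟨?_, ?_⟩⟩ <;> push_cast <;> linarith

/-- forward enumeration: crossing parameters are nodes -/
lemma crossing_param_eq (m : ℕ) {x : ℝ} (hc : Real.cos (Real.pi * x) = 1/2)
    (h1 : -(2/3) ≤ x) (h2 : x + 1 ≤ 2*m + 1/3) : ∃ j : ℕ, j < 2*m ∧ x = nxx j := by
  rw [cos_pi_eq_half_iff] at hc
  obtain ⟨k, hk | hk⟩ := hc
  · -- x = 1/3 + 2k, odd node j = 2k+1
    rw [hk] at h1 h2
    have hk0 : 0 ≤ k := by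
      by_contra hneg
      push_neg at hneg
      have hle : k ≤ -1 := by omega
      have : (k : ℝ) ≤ -1 := by exact_mod_cast hle
      linarith
    have hkm : k ≤ (m : ℤ) - 1 := by
      by_contra hbig
      push_neg at hbig
      have hge : (m : ℤ) ≤ k := by omega
      have : (m : ℝ) ≤ (k : ℝ) := by exact_mod_cast hge
      linarith
    lift k to ℕ using hk0 with k'
    have hkm' : k' + 1 ≤ m := by exact_mod_cast (by omega : (k' : ℤ) + 1 ≤ m)
    refine ⟨2*k'+1, by omega, ?_⟩
    have hne : ¬ Even (2*k'+1) := by simp [Nat.even_iff]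
    rw [hk, nxx, if_neg hne]
    push_cast; ring
  · -- x = -1/3 + 2k, even node j = 2k
    rw [hk] at h1 h2
    have hk0 : 0 ≤ k := by
      by_contra hneg
      push_neg at hneg
      have hle : k ≤ -1 := by omega
      have : (k : ℝ) ≤ -1 := by exact_mod_cast hle
      linarith
    have hkm : k ≤ (m : ℤ) - 1 := by
      by_contra hbig
      push_neg at hbig
      have hge : (m : ℤ) ≤ k := by omega
      have : (m : ℝ) ≤ (k : ℝ) := by exact_mod_cast hge
      linarith
    lift k to ℕ using hk0 with k'
    have hkm' : k' + 1 ≤ m := by exact_mod_cast (by omega : (k' : ℤ) + 1 ≤ m)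
    refine ⟨2*k', by omega, ?_⟩
    rw [hk, nxx, if_pos ⟨k', by ring⟩]
    push_cast; ring


/-- the crossings set of the spiral -/
lemma crossings_spiral (m : ℕ) :
    {p : ℝ × ℝ | ∃ s ∈ Icc (0:ℝ) 1, ∃ t ∈ Icc (0:ℝ) 1,
      s ≠ t ∧ cur m s = p ∧ cur m t = p} = nodePt '' {j : ℕ | j < 2*m} := by
  ext p
  simp only [mem_setOf_eq, mem_image]
  constructor
  · rintro ⟨s, hs, t, ht, hst, hsp, htp⟩
    have hx : xm m s ∈ Icc (-(2/3) : ℝ) (2*m + 1/3) := (xm_mem_iff m s).2 hs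
    have hy : xm m t ∈ Icc (-(2/3) : ℝ) (2*m + 1/3) := (xm_mem_iff m t).2 ht
    have hcc : cpt (xm m s) = cpt (xm m t) := by
      have : cur m s = cur m t := by rw [hsp, htp]
      exact vecOf_inj this
    rw [cpt_eq_iff] at hcc
    obtain ⟨n, hn, hg⟩ := hcc
    have hns : n ≠ 0 := by
      rintro rfl
      apply hst
      apply xm_inj m
      simpa using hn
    have hshift : gf (xm m t + n) = gf (xm m t) := by rw [← hn]; exact hg
    rw [gf_eq_shift_iff] at hshift
    rcases hshift with h0 | ⟨h1, hc⟩ | ⟨h1, hc⟩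
    · exact absurd h0 hns
    · -- xm m s = xm m t + 1, crossing at x := xm m t
      subst h1
      obtain ⟨j, hj, hx'⟩ := crossing_param_eq m hc hy.1 (by
        have : xm m t + 1 = xm m s := by rw [hn]; push_cast; ring
        rw [this]; exact hx.2)
      refine ⟨j, hj, ?_⟩
      rw [← htp, cur, nodePt, hx']
    · -- xm m t = xm m s + 1
      subst h1
      have hxe : xm m t = xm m s + 1 := by
        have : xm m s = xm m t + (-1 : ℤ) := hn
        push_cast at this
        linarith
      have hcx : Real.cos (Real.pi * xm m s) = 1/2 := by
        have := cos_pi_add_int (xm m s) 1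
        rw [show xm m s + (1:ℤ) = xm m t by rw [hxe]; push_cast; ring] at this
        simp at this
        rw [hc] at this
        linarith
      obtain ⟨j, hj, hx'⟩ := crossing_param_eq m hcx hx.1 (by rw [← hxe]; exact hy.2)
      refine ⟨j, hj, ?_⟩
      rw [← hsp, cur, nodePt, hx']
  · rintro ⟨j, hj, rfl⟩
    obtain ⟨hj1, hj2⟩ := nxx_mem m hj
    refine ⟨invx m (nxx j), ?_, invx m (nxx j + 1), ?_, ?_, ?_, ?_⟩
    · rw [← xm_mem_iff m, xm_invx]; exact hj1
    · rw [← xm_mem_iff m, xm_invx]; exact hj2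
    · intro h
      have := congrArg (xm m) h
      rw [xm_invx, xm_invx] at this
      linarith
    · rw [cur, xm_invx]; rfl
    · rw [cur, xm_invx, cpt_nxx_succ]; rfl

lemma crossings_ncard (m : ℕ) :
    (nodePt '' {j : ℕ | j < 2*m}).ncard = 2*m := by
  have h1 : {j : ℕ | j < 2*m} = ↑(Finset.range (2*m)) := by ext j; simp
  rw [h1, Set.ncard_image_of_injective _ nodePt_inj, Set.ncard_coe_finset,
    Finset.card_range]

lemma sin_pi_nxx_ne (j : ℕ) : Real.sin (Real.pi * nxx j) ≠ 0 := by
  intro h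
  have := Real.sin_sq_add_cos_sq (Real.pi * nxx j)
  rw [h, cos_nxx] at this
  norm_num at this

/-- the preimage structure at a node -/
lemma preimage_node (m : ℕ) {j : ℕ} (hj : j < 2*m) :
    {u : ℝ | u ∈ Icc (0:ℝ) 1 ∧ cur m u = nodePt j}
      = {invx m (nxx j), invx m (nxx j + 1)} := by
  obtain ⟨hj1, hj2⟩ := nxx_mem m hj
  ext u
  simp only [mem_setOf_eq, mem_insert_iff, mem_singleton_iff]
  constructor
  · rintro ⟨hu, hcu⟩
    have hcc : cpt (xm m u) = cpt (nxx j) := vecOf_inj hcu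
    rw [cpt_eq_iff] at hcc
    obtain ⟨n, hn, hg⟩ := hcc
    have hshift : gf (nxx j + n) = gf (nxx j) := by rw [← hn]; exact hg
    rw [gf_eq_shift_iff] at hshift
    rcases hshift with h0 | ⟨h1, hc⟩ | ⟨h1, hc⟩
    · subst h0
      left
      apply xm_inj m
      rw [xm_invx]
      simpa using hn
    · subst h1
      right
      apply xm_inj m
      rw [xm_invx]
      simpa using hn
    · exfalso
      rw [cos_nxx j] at hc
      norm_num at hc
  · rintro (rfl | rfl)
    · exact ⟨(xm_mem_iff m _).1 (by rw [xm_invx]; exact hj1), by rw [cur, xm_invx]; rfl⟩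
    · exact ⟨(xm_mem_iff m _).1 (by rw [xm_invx]; exact hj2),
        by rw [cur, xm_invx, cpt_nxx_succ]; rfl⟩

/-- transversality at nodes -/
lemma li_node (m : ℕ) (j : ℕ) :
    LinearIndependent ℝ ![deriv (cur m) (invx m (nxx j)), deriv (cur m) (invx m (nxx j + 1))] := by
  rw [deriv_cur, deriv_cur, xm_invx, xm_invx]
  apply li_of_det
  have hre : ∀ z : ℂ, (vecOf z).1 = z.re := fun _ => rfl
  have him : ∀ z : ℂ, (vecOf z).2 = z.im := fun _ => rfl
  rw [hre, hre, him, him]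
  have e1 : ((2*m+1 : ℂ)) * (cpt (nxx j) * ld (nxx j))
      = ((2*m+1 : ℂ) * cpt (nxx j)) * ld (nxx j) := by ring
  have e2 : ((2*m+1 : ℂ)) * (cpt (nxx j + 1) * ld (nxx j + 1))
      = ((2*m+1 : ℂ) * cpt (nxx j)) * ld (nxx j + 1) := by rw [cpt_nxx_succ]; ring
  rw [e1, e2, det_mul, det_ld]
  have hgd : gd (nxx j) - gd (nxx j + 1) = -(2 * Real.pi * Real.sin (Real.pi * nxx j)) := by
    unfold gd
    have : Real.sin (Real.pi * (nxx j + 1)) = - Real.sin (Real.pi * nxx j) := by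
      rw [show Real.pi * (nxx j + 1) = Real.pi * nxx j + Real.pi by ring, Real.sin_add_pi]
    rw [this]
    ring
  have hz : ((2*m+1 : ℂ) * cpt (nxx j)) ≠ 0 := by
    apply mul_ne_zero _ (cpt_ne_zero _)
    intro h
    have h' : (2*(m:ℝ)+1) = 0 := by
      have := congrArg Complex.re h
      simpa using this
    have hm0 : (0:ℝ) ≤ m := Nat.cast_nonneg m
    linarith
  have hnsq : 0 < Complex.normSq ((2*m+1 : ℂ) * cpt (nxx j)) := Complex.normSq_pos.2 hz
  have hsin := sin_pi_nxx_ne j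
  have hpi := Real.pi_pos
  apply mul_ne_zero (ne_of_gt hnsq)
  rw [hgd]
  rcases lt_trichotomy (Real.sin (Real.pi * nxx j)) 0 with hs|hs|hs
  · intro h; nlinarith [mul_pos (mul_pos (by positivity : (0:ℝ) < 4 * Real.pi^2) (by positivity : (0:ℝ) < 2*Real.pi)) (neg_pos.2 hs)]
  · exact absurd hs hsin
  · intro h; nlinarith [mul_pos (mul_pos (by positivity : (0:ℝ) < 4 * Real.pi^2) (by positivity : (0:ℝ) < 2*Real.pi)) hs]

-- begin chunk f
lemma gf_left : gf (-(2/3)) = -(7/6) := by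
  unfold gf
  have : Real.pi * (-(2/3)) = -(Real.pi - Real.pi/3) := by ring
  rw [this, Real.cos_neg, Real.cos_pi_sub, Real.cos_pi_div_three]
  norm_num

lemma cos_right (m : ℕ) : Real.cos (Real.pi * (2*m + 1/3)) = 1/2 := by
  rw [cos_pi_eq_half_iff]
  exact ⟨m, Or.inl (by push_cast; ring)⟩

lemma gf_right (m : ℕ) : gf (2*m + 1/3) = 2*m + 5/6 := by
  unfold gf
  rw [show Real.cos (Real.pi * (2*(m:ℝ) + 1/3)) = 1/2 from cos_right m]
  ring

/-- endpoints -/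
def pL : ℝ × ℝ := vecOf (cpt (-(2/3)))
def pR (m : ℕ) : ℝ × ℝ := vecOf (cpt (2*m + 1/3))

lemma cur_zero (m : ℕ) : cur m 0 = pL := by
  rw [cur, pL]
  norm_num [xm]

lemma cur_one (m : ℕ) : cur m 1 = pR m := by
  have hx : xm m 1 = 2*m + 1/3 := by unfold xm; ring
  rw [cur, hx, pR]

lemma abs_ne_of_gf_ne {x y : ℝ} (h : gf x ≠ gf y) : cpt x ≠ cpt y := by
  intro hc
  apply h
  have h1 := congrArg (‖·‖) hc
  rw [abs_cpt, abs_cpt] at h1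
  have := Real.exp_injective h1
  have hpi := Real.pi_pos
  nlinarith

lemma ends_ne_spiral (m : ℕ) : cur m 0 ≠ cur m 1 := by
  rw [cur_zero, cur_one, pL, pR]
  intro h
  apply abs_ne_of_gf_ne (x := -(2/3)) (y := 2*m+1/3) _ (vecOf_inj h)
  rw [gf_left, gf_right]
  have : (0:ℝ) ≤ m := Nat.cast_nonneg m
  intro hcontr
  linarith

/-- radial data for the segment -/
def rL : ℝ := Real.exp (2 * Real.pi * (-(7/6)))
def rR (m : ℕ) : ℝ := Real.exp (2 * Real.pi * (2*m + 5/6))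
def wdir : ℂ := Complex.exp ((2 * Real.pi * (-(2/3)) : ℝ) * Complex.I)

lemma wdir_ne : wdir ≠ 0 := Complex.exp_ne_zero _

lemma cpt_split (x : ℝ) : cpt x = (Real.exp (2 * Real.pi * gf x) : ℂ)
    * Complex.exp ((2 * Real.pi * x : ℝ) * Complex.I) := by
  rw [cpt, lf, Complex.exp_add, Complex.ofReal_exp]

lemma cpt_ray (x : ℝ) (n : ℤ) (hx : x = -(2/3) + n) :
    cpt x = (Real.exp (2 * Real.pi * gf x) : ℂ) * wdir := by
  rw [cpt_split, wdir]
  congr 1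
  rw [hx]
  rw [show ((2*Real.pi*(-(2/3)+(n:ℝ)) : ℝ) : ℂ) * Complex.I
      = ((2*Real.pi*(-(2/3)) : ℝ) : ℂ) * Complex.I + (n:ℂ) * (2 * (Real.pi:ℂ) * Complex.I) by
    push_cast; ring]
  rw [Complex.exp_add, Complex.exp_int_mul_two_pi_mul_I, mul_one]

/-- the straight reference curve -/
def seg (m : ℕ) (t : ℝ) : ℝ × ℝ := vecOf ((rL + t * (rR m - rL) : ℝ) * wdir)

lemma rL_pos : 0 < rL := Real.exp_pos _
lemma rLR (m : ℕ) : rL < rR m := by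
  rw [rL, rR]
  apply Real.exp_lt_exp.2
  have : (0:ℝ) ≤ m := Nat.cast_nonneg m
  have hpi := Real.pi_pos
  nlinarith

lemma seg_zero (m : ℕ) : seg m 0 = pL := by
  rw [seg, pL, cpt_ray (-(2/3)) 0 (by norm_num), gf_left]
  norm_num [rL]

lemma seg_one (m : ℕ) : seg m 1 = pR m := by
  rw [seg, pR, cpt_ray (2*m+1/3) (2*m+1) (by push_cast; ring), gf_right]
  norm_num [rR]

lemma seg_inj (m : ℕ) : Function.Injective (seg m) := by
  intro a b h
  have h2 := vecOf_inj h
  have h3 : ((rL + a * (rR m - rL) : ℝ) : ℂ) = ((rL + b * (rR m - rL) : ℝ) : ℂ) :=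
    mul_right_cancel₀ wdir_ne h2
  have h4 : rL + a * (rR m - rL) = rL + b * (rR m - rL) := by exact_mod_cast h3
  have h5 : rR m - rL ≠ 0 := ne_of_gt (by linarith [rLR m])
  field_simp at h4
  exact mul_right_cancel₀ h5 (by linarith)

lemma hasDerivAt_seg (m : ℕ) (t : ℝ) :
    HasDerivAt (seg m) (vecOf ((rR m - rL : ℝ) * wdir)) t := by
  have h1 : HasDerivAt (fun t : ℝ => ((rL + t * (rR m - rL) : ℝ) : ℂ))
      ((rR m - rL : ℝ) : ℂ) t := by
    have : HasDerivAt (fun t : ℝ => rL + t * (rR m - rL)) (rR m - rL) t := by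
      simpa using ((hasDerivAt_id t).mul_const (rR m - rL)).const_add rL
    exact this.ofReal_comp
  have h2 := h1.mul_const wdir
  have h3 : HasFDerivAt (⇑Complex.equivRealProdCLM)
      (Complex.equivRealProdCLM : ℂ →L[ℝ] ℝ × ℝ) ((rL + t * (rR m - rL) : ℝ) * wdir) :=
    Complex.equivRealProdCLM.toContinuousLinearMap.hasFDerivAt
  have h4 := h3.comp_hasDerivAt t h2
  exact h4

lemma deriv_seg (m : ℕ) (t : ℝ) :
    deriv (seg m) t = vecOf ((rR m - rL : ℝ) * wdir) := (hasDerivAt_seg m t).deriv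

lemma deriv_seg_ne (m : ℕ) (t : ℝ) : deriv (seg m) t ≠ 0 := by
  rw [deriv_seg]
  intro h
  have h2 : ((rR m - rL : ℝ) : ℂ) * wdir = 0 := by
    apply vecOf_inj
    simpa [vecOf] using h
  rcases mul_eq_zero.1 h2 with h' | h'
  · have : rR m - rL = 0 := by exact_mod_cast h'
    linarith [rLR m]
  · exact wdir_ne h'

lemma contDiff_seg (m : ℕ) : ContDiff ℝ 1 (seg m) := by
  apply (Complex.equivRealProdCLM.toContinuousLinearMap.contDiff).comp
  apply ContDiff.mul _ contDiff_const
  exact Complex.ofRealCLM.contDiff.comp (contDiff_const.add (contDiff_id.mul contDiff_const))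


lemma abs_wdir : ‖wdir‖ = 1 := by
  rw [wdir, Complex.norm_exp]
  simp

lemma ld_im (x : ℝ) : (ld x).im = 2 * Real.pi := by simp [ld]

lemma mem_seg_iff (m : ℕ) (q : ℝ × ℝ) :
    q ∈ seg m '' Icc 0 1 ↔ ∃ ρ : ℝ, rL ≤ ρ ∧ ρ ≤ rR m ∧ q = vecOf ((ρ:ℝ) * wdir) := by
  constructor
  · rintro ⟨t, ⟨ht0, ht1⟩, rfl⟩
    refine ⟨rL + t * (rR m - rL), ?_, ?_, rfl⟩
    · nlinarith [rLR m]
    · nlinarith [rLR m]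
  · rintro ⟨ρ, h0, h1, rfl⟩
    have hd : 0 < rR m - rL := by linarith [rLR m]
    refine ⟨(ρ - rL)/(rR m - rL), ⟨?_, ?_⟩, ?_⟩
    · exact div_nonneg (by linarith) (le_of_lt hd)
    · rw [div_le_one hd]; linarith
    · rw [seg]
      congr 2
      field_simp
      push_cast; ring

 /-- membership in the spiral image -/
lemma mem_cur_iff (m : ℕ) (q : ℝ × ℝ) :
    q ∈ cur m '' Icc 0 1 ↔ ∃ x ∈ Icc (-(2/3) : ℝ) (2*m + 1/3), q = vecOf (cpt x) := by
  constructor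
  · rintro ⟨t, ht, rfl⟩
    exact ⟨xm m t, (xm_mem_iff m t).2 ht, rfl⟩
  · rintro ⟨x, hx, rfl⟩
    refine ⟨invx m x, ?_, ?_⟩
    · rw [← xm_mem_iff m, xm_invx]; exact hx
    · rw [cur, xm_invx]

 /-- solving for spiral points on the ray -/
lemma ray_sol (m : ℕ) {x ρ : ℝ} (hx : x ∈ Icc (-(2/3) : ℝ) (2*m + 1/3)) (hρ : 0 < ρ)
    (h : cpt x = (ρ:ℝ) * wdir) :
    ∃ n : ℤ, 0 ≤ n ∧ n ≤ 2*m+1 ∧ x = -(2/3) + n := by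
  have h2 : Complex.exp (lf x)
      = Complex.exp ((Real.log ρ : ℝ) + ((2 * Real.pi * (-(2/3)) : ℝ)) * Complex.I) := by
    rw [← cpt, h, Complex.exp_add, wdir]
    congr 1
    rw [← Complex.ofReal_exp, Real.exp_log hρ]
  rw [Complex.exp_eq_exp_iff_exists_int] at h2
  obtain ⟨n, hn⟩ := h2
  have him := congrArg Complex.im hn
  simp [lf] at him
  have hpi := Real.pi_pos
  have hxn : x = -(2/3) + n := by nlinarith [him]
  refine ⟨n, ?_, ?_, hxn⟩
  · have : -(2/3) ≤ x := hx.1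
    rw [hxn] at this
    have : (-1 : ℝ) < n := by linarith
    exact_mod_cast by exact_mod_cast Int.lt_iff_add_one_le.1 (by exact_mod_cast this : (-1 : ℤ) < n)
  · have : x ≤ 2*m + 1/3 := hx.2
    rw [hxn] at this
    have h3 : (n : ℝ) ≤ 2*m + 1 := by linarith
    exact_mod_cast h3

 lemma nxx_odd (k : ℕ) : nxx (2*k+1) = (2*k+1 : ℝ) - 2/3 := by
  rw [nxx_def, if_neg (by simp [Nat.even_iff])]
  push_cast; ring

 /-- the intersection points -/
def ipt (m : ℕ) (i : ℕ) : ℝ × ℝ :=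
  if i = 0 then pL else if i = m+1 then pR m else nodePt (2*i - 1)

def iex (m : ℕ) (i : ℕ) : ℝ :=
  if i = 0 then -(7/6) else if i = m+1 then 2*m + 5/6 else (2*i : ℝ) - 7/6

lemma iex_zero (m : ℕ) : iex m 0 = -(7/6) := if_pos rfl
lemma iex_last (m : ℕ) : iex m (m+1) = 2*m + 5/6 := by
  rw [iex, if_neg (by omega), if_pos rfl]
lemma iex_mid (m : ℕ) {i : ℕ} (h0 : i ≠ 0) (h1 : i ≠ m+1) : iex m i = (2*i : ℝ) - 7/6 := by
  rw [iex, if_neg h0, if_neg h1]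

lemma ipt_form (m : ℕ) {i : ℕ} (hi : i < m+2) :
    ipt m i = vecOf ((Real.exp (2 * Real.pi * iex m i) : ℝ) * wdir) ∧
      (-(7/6) : ℝ) ≤ iex m i ∧ iex m i ≤ 2*m + 5/6 := by
  rcases eq_or_ne i 0 with rfl | hi0
  · rw [ipt, if_pos rfl, iex, if_pos rfl, pL, cpt_ray (-(2/3)) 0 (by norm_num), gf_left]
    have : (0:ℝ) ≤ m := Nat.cast_nonneg m
    exact ⟨rfl, le_refl _, by linarith⟩
  · rcases eq_or_ne i (m+1) with rfl | him
    · rw [ipt, if_neg hi0, if_pos rfl, iex, if_neg hi0, if_pos rfl, pR,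
        cpt_ray (2*m+1/3) (2*m+1) (by push_cast; ring), gf_right]
      have : (0:ℝ) ≤ m := Nat.cast_nonneg m
      exact ⟨rfl, by linarith, le_refl _⟩
    · have h1i : 1 ≤ i := by omega
      have him' : i ≤ m := by omega
      have hcast : ((2*i - 1 : ℕ) : ℝ) = 2*(i:ℝ) - 1 := by
        push_cast [Nat.cast_sub (by omega : 1 ≤ 2*i)]
        ring
      have hj : 2*i - 1 = 2*(i-1)+1 := by omega
      have hx : nxx (2*i-1) = -(2/3) + (((2*i-1 : ℕ) : ℤ) : ℝ) := by
        rw [hj, nxx_odd]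
        push_cast [Nat.cast_sub (by omega : 1 ≤ i), Nat.cast_sub (by omega : 1 ≤ 2*i)]
        ring
      have hgf : gf (nxx (2*i-1)) = (2*(i:ℝ)) - 7/6 := by
        rw [gf_nxx, hj, nxx_odd]
        push_cast [Nat.cast_sub (by omega : 1 ≤ i)]
        ring
      rw [ipt, if_neg hi0, if_neg him, iex_mid m hi0 him, nodePt,
        cpt_ray (nxx (2*i-1)) ((2*i-1 : ℕ) : ℤ) hx, hgf]
      have hle : (1:ℝ) ≤ i := by exact_mod_cast h1i
      have hge : (i:ℝ) ≤ m := by exact_mod_cast him'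
      exact ⟨rfl, by linarith, by linarith⟩

 lemma iex_inj (m : ℕ) (hm : 1 ≤ m) : InjOn (iex m) {i : ℕ | i < m+2} := by
  intro a ha b hb hab
  simp only [mem_setOf_eq] at ha hb
  by_contra hne
  wlog hlt : a < b generalizing a b
  · exact this hab.symm hb ha (Ne.symm hne) (by omega)
  have hmr : (1:ℝ) ≤ m := by exact_mod_cast hm
  rcases eq_or_ne a 0 with rfl | ha0
  · rw [iex_zero] at hab
    rcases eq_or_ne b (m+1) with rfl | hbm
    · rw [iex_last] at hab
      linarith
    · have h1b : (1:ℝ) ≤ b := by exact_mod_cast (by omega : 1 ≤ b)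
      rw [iex_mid m (by omega) hbm] at hab
      linarith
  · have ham : a ≠ m + 1 := by omega
    rw [iex_mid m ha0 ham] at hab
    have ha1 : (1:ℝ) ≤ a := by exact_mod_cast (by omega : 1 ≤ a)
    rcases eq_or_ne b (m+1) with rfl | hbm
    · have : (a:ℝ) ≤ m := by exact_mod_cast (by omega : a ≤ m)
      rw [iex_last] at hab
      linarith
    · have : (a:ℝ) + 1 ≤ b := by exact_mod_cast Nat.succ_le_of_lt hlt
      rw [iex_mid m (by omega) hbm] at hab
      linarith

 lemma ipt_injOn (m : ℕ) (hm : 1 ≤ m) : InjOn (ipt m) {i : ℕ | i < m+2} := by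
  intro a ha b hb hab
  apply iex_inj m hm ha hb
  obtain ⟨hfa, _, _⟩ := ipt_form m ha
  obtain ⟨hfb, _, _⟩ := ipt_form m hb
  rw [hfa, hfb] at hab
  have h2 := vecOf_inj hab
  have h3 := congrArg (‖·‖) h2
  simp only [norm_mul, abs_wdir, mul_one, Complex.norm_real, Real.norm_eq_abs] at h3
  rw [abs_of_pos (Real.exp_pos _), abs_of_pos (Real.exp_pos _)] at h3
  have h4 := Real.exp_injective h3
  have hpi := Real.pi_pos
  nlinarith

 /-- the image intersection -/
lemma inter_eq (m : ℕ) :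
    (seg m '' Icc 0 1) ∩ (cur m '' Icc 0 1) = ipt m '' {i : ℕ | i < m+2} := by
  ext q
  constructor
  · rintro ⟨hq1, hq2⟩
    rw [mem_seg_iff] at hq1
    rw [mem_cur_iff] at hq2
    obtain ⟨ρ, hρ0, hρ1, rfl⟩ := hq1
    obtain ⟨x, hx, hqx⟩ := hq2
    have hρpos : 0 < ρ := lt_of_lt_of_le rL_pos hρ0
    have hx2 : cpt x = (ρ:ℝ) * wdir := (vecOf_inj hqx).symm
    obtain ⟨n, hn0, hn1, hxn⟩ := ray_sol m hx hρpos hx2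
    lift n to ℕ using hn0 with n'
    have hn1' : n' ≤ 2*m+1 := by exact_mod_cast hn1
    rw [mem_image]
    rcases Nat.eq_zero_or_pos n' with rfl | hpos
    · refine ⟨0, by simp, ?_⟩
      rw [ipt, if_pos rfl, pL, hqx, hxn]
      norm_num
    · rcases eq_or_ne n' (2*m+1) with rfl | hne
      · refine ⟨m+1, by simp, ?_⟩
        rw [ipt, if_neg (by omega), if_pos rfl, pR, hqx, hxn]
        congr 2
        push_cast; ring
      · have hn2 : n' ≤ 2*m := by omega
        rcases Nat.even_or_odd n' with ⟨k, hk⟩ | ⟨k, hk⟩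
        · -- n' = 2k even, point = nodePt (2k-1), i = k
          have hk1 : 1 ≤ k := by omega
          have hkm : k ≤ m := by omega
          refine ⟨k, by simp; omega, ?_⟩
          rw [ipt, if_neg (by omega), if_neg (by omega), hqx, hxn, nodePt]
          have h2k : 2*k - 1 = 2*(k-1)+1 := by omega
          rw [h2k, ← cpt_nxx_succ, nxx_odd]
          congr 2
          have : (1:ℝ) ≤ k := by exact_mod_cast hk1
          push_cast [hk]
          have hc : ((k:ℝ) - 1) = ((k - 1 : ℕ) : ℝ) := by
            push_cast [Nat.cast_sub hk1]; ring
          rw [← hc]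
          ring
        · -- n' = 2k+1 odd, point = nodePt n', i = k+1
          have hkm : k + 1 ≤ m := by omega
          refine ⟨k+1, by simp; omega, ?_⟩
          rw [ipt, if_neg (by omega), if_neg (by omega), hqx, hxn, nodePt]
          have h2k : 2*(k+1) - 1 = 2*k+1 := by omega
          rw [h2k, nxx_odd]
          congr 2
          push_cast [hk]
          ring
  · rintro ⟨i, hi, rfl⟩
    simp only [mem_setOf_eq] at hi
    obtain ⟨hform, hlo, hhi⟩ := ipt_form m hi
    constructor
    · rw [mem_seg_iff]
      refine ⟨Real.exp (2 * Real.pi * iex m i), ?_, ?_, hform⟩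
      · rw [rL]
        apply Real.exp_le_exp.2
        have hpi := Real.pi_pos
        nlinarith
      · rw [rR]
        apply Real.exp_le_exp.2
        have hpi := Real.pi_pos
        nlinarith
    · rw [mem_cur_iff]
      rcases eq_or_ne i 0 with rfl | hi0
      · exact ⟨-(2/3), by constructor <;> [linarith; nlinarith [Nat.cast_nonneg (α := ℝ) m]], by rw [ipt, if_pos rfl, pL]⟩
      · rcases eq_or_ne i (m+1) with rfl | him
        · refine ⟨2*m+1/3, ?_, by rw [ipt, if_neg hi0, if_pos rfl, pR]⟩
          constructor
          · nlinarith [Nat.cast_nonneg (α := ℝ) m]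
          · exact le_refl _
        · have hj : 2*i - 1 < 2*m := by omega
          refine ⟨nxx (2*i-1), (nxx_mem m hj).1, by rw [ipt, if_neg hi0, if_neg him, nodePt]⟩

 lemma inter_ncard (m : ℕ) (hm : 1 ≤ m) :
    ((seg m '' Icc 0 1) ∩ (cur m '' Icc 0 1)).ncard = m + 2 := by
  rw [inter_eq m]
  have h1 : {i : ℕ | i < m+2} = ↑(Finset.range (m+2)) := by ext i; simp
  rw [h1, Set.ncard_image_of_injOn (by rw [← h1]; exact ipt_injOn m hm),
    Set.ncard_coe_finset, Finset.card_range]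

 /-- transversality of the segment against the spiral -/
lemma li_seg_cur (m : ℕ) : ∀ s ∈ Icc (0:ℝ) 1, ∀ t ∈ Icc (0:ℝ) 1, seg m s = cur m t →
    LinearIndependent ℝ ![deriv (seg m) s, deriv (cur m) t] := by
  intro s hs t ht hst
  rw [deriv_seg, deriv_cur]
  set x := xm m t
  set ρ := rL + s * (rR m - rL) with hρ
  have hρpos : 0 < ρ := by
    have := hs.1
    have := hs.2
    have := rLR m
    have := rL_pos
    nlinarith
  have hx2 : cpt x = (ρ:ℝ) * wdir := (vecOf_inj hst).symm
  apply li_of_det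
  have hre : ∀ z : ℂ, (vecOf z).1 = z.re := fun _ => rfl
  have him : ∀ z : ℂ, (vecOf z).2 = z.im := fun _ => rfl
  rw [hre, him, hre, him]
  have e1 : ((rR m - rL : ℝ) : ℂ) * wdir = wdir * ((rR m - rL : ℝ) : ℂ) := by ring
  have e2 : ((2*m+1 : ℂ)) * (cpt x * ld x) = wdir * (((ρ : ℝ) : ℂ) * ((2*m+1 : ℂ) * ld x)) := by
    rw [hx2]; ring
  rw [e1, e2, det_mul]
  have hwpos : 0 < Complex.normSq wdir := Complex.normSq_pos.2 wdir_ne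
  have hre2 : (((rR m - rL : ℝ) : ℂ)).re = rR m - rL := rfl
  have him2 : (((rR m - rL : ℝ) : ℂ)).im = 0 := rfl
  rw [hre2, him2]
  have him3 : ((((ρ : ℝ) : ℂ)) * ((2*m+1 : ℂ) * ld x)).im = ρ * ((2*m+1) * (2*Real.pi)) := by
    have h5 : ((2*m+1 : ℂ) * ld x).im = (2*m+1) * (2*Real.pi) := by
      rw [show ((2*m+1 : ℂ)) = (((2*(m:ℝ)+1 : ℝ)) : ℂ) by push_cast; ring]
      rw [Complex.im_ofReal_mul, ld_im]
    rw [Complex.im_ofReal_mul, h5]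
  rw [him3]
  have hd : 0 < rR m - rL := by linarith [rLR m]
  have hpi := Real.pi_pos
  have hmp : (0:ℝ) < 2*m+1 := by positivity
  have : 0 < (rR m - rL) * (ρ * ((2*m+1) * (2*Real.pi))) := by positivity
  nlinarith

-- chunk g1: periodization and the separating functions
def cofv (p : ℝ × ℝ) : ℂ := (p.1 : ℂ) + (p.2 : ℂ) * Complex.I

lemma continuous_cofv : Continuous cofv := by
  apply Continuous.add
  · exact Complex.ofRealCLM.continuous.comp continuous_fst
  · exact (Complex.ofRealCLM.continuous.comp continuous_snd).mul continuous_const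

lemma cofv_vecOf (z : ℂ) : cofv (vecOf z) = z := by
  simp [cofv, vecOf, Complex.re_add_im]

lemma vecOf_cofv (p : ℝ × ℝ) : vecOf (cofv p) = p := by
  simp [cofv, vecOf]

lemma continuous_gf : Continuous gf := by
  unfold gf
  exact continuous_id.add (Real.continuous_cos.comp (continuous_const.mul continuous_id))

/-- periodization of the log-profile over window `[c, c+1)` -/
def per (c y : ℝ) : ℝ := gf (c + Int.fract (y - c))

lemma per_add_int (c y : ℝ) (n : ℤ) : per c (y + n) = per c y := by
  unfold per
  rw [show y + n - c = (y - c) + n by ring, Int.fract_add_intCast]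

lemma per_continuous (c : ℝ) (hc : gf (c+1) = gf c) : Continuous (per c) := by
  have h1 : ContinuousOn (fun u : ℝ => gf (c + u)) (Icc 0 1) :=
    (continuous_gf.comp (continuous_const.add continuous_id)).continuousOn
  have h2 : Continuous ((fun u : ℝ => gf (c + u)) ∘ Int.fract) := by
    apply ContinuousOn.comp_fract'' h1
    simpa using hc.symm
  exact h2.comp (continuous_id.sub continuous_const)

lemma per_spec (c y : ℝ) : ∃ x : ℝ, x ∈ Ico c (c+1) ∧ per c y = gf x ∧ ∃ n : ℤ, x = y + n := by
  refine ⟨c + Int.fract (y - c), ⟨by simp [Int.fract_nonneg], by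
    have := Int.fract_lt_one (y - c); linarith⟩, rfl, ⟨-⌊y - c⌋, ?_⟩⟩
  rw [Int.fract]
  push_cast
  ring

lemma per_int_shift (c : ℝ) (n : ℤ) : per c (c + n) = gf c := by
  have := per_add_int c c n
  rw [show c + (n:ℝ) = c + n from rfl] at this
  rw [this]
  unfold per
  simp

/-- normalized angle -/
def xarg (z : ℂ) : ℝ := Complex.arg z / (2 * Real.pi)

lemma xarg_spec (z : ℂ) :
    z = (‖z‖ : ℝ) * Complex.exp ((2 * Real.pi * xarg z : ℝ) * Complex.I) := by
  have hpi : (2 * Real.pi) ≠ 0 := by positivity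
  rw [show 2 * Real.pi * xarg z = Complex.arg z by rw [xarg]; field_simp]
  exact (Complex.norm_mul_exp_arg_mul_I z).symm

lemma xarg_cpt (x : ℝ) : ∃ n : ℤ, xarg (cpt x) = x + n := by
  have h1 := xarg_spec (cpt x)
  rw [abs_cpt] at h1
  have h2 := cpt_split x
  have h3 : (Real.exp (2 * Real.pi * gf x) : ℂ) * Complex.exp ((2 * Real.pi * xarg (cpt x) : ℝ) * Complex.I)
      = (Real.exp (2 * Real.pi * gf x) : ℂ) * Complex.exp ((2 * Real.pi * x : ℝ) * Complex.I) := by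
    rw [← h1, h2]
  have h4 := mul_left_cancel₀ (by exact_mod_cast Real.exp_ne_zero _ : ((Real.exp (2 * Real.pi * gf x) : ℝ) : ℂ) ≠ 0) h3
  rw [Complex.exp_eq_exp_iff_exists_int] at h4
  obtain ⟨n, hn⟩ := h4
  have him := congrArg Complex.im hn
  simp at him
  have hpi := Real.pi_pos
  refine ⟨n, by nlinarith [him]⟩

/-- the separating function for window starting at `c` -/
def Gz (c : ℝ) (p : ℝ × ℝ) : ℝ :=
  ‖cofv p‖ - Real.exp (2 * Real.pi * per c (xarg (cofv p)))

lemma Gz_cpt (c x : ℝ) : Gz c (vecOf (cpt x))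
    = Real.exp (2 * Real.pi * gf x) - Real.exp (2 * Real.pi * per c x) := by
  unfold Gz
  rw [cofv_vecOf, abs_cpt]
  obtain ⟨n, hn⟩ := xarg_cpt x
  rw [hn, per_add_int]

lemma gf_lb (x : ℝ) : x - 1 ≤ gf x := by
  unfold gf
  linarith [Real.neg_one_le_cos (Real.pi * x)]

lemma per_lb (c y : ℝ) : c - 1 ≤ per c y := by
  obtain ⟨x, hx, hpx, _⟩ := per_spec c y
  rw [hpx]
  linarith [gf_lb x, hx.1]

/-- negativity of `Gz` near the origin -/
lemma Gz_neg (c : ℝ) {p : ℝ × ℝ} (h : ‖cofv p‖ < Real.exp (2 * Real.pi * (c - 1))) :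
    Gz c p < 0 := by
  unfold Gz
  have h2 : Real.exp (2 * Real.pi * (c-1)) ≤ Real.exp (2 * Real.pi * per c (xarg (cofv p))) := by
    apply Real.exp_le_exp.2
    have hpi := Real.pi_pos
    nlinarith [per_lb c (xarg (cofv p))]
  linarith

/-- continuity of the angle composite away from `0` -/
lemma perArg_continuousAt (c : ℝ) (hc : gf (c+1) = gf c) {z : ℂ} (hz : z ≠ 0) :
    ContinuousAt (fun w => per c (xarg w)) z := by
  have hper := per_continuous c hc
  by_cases hsl : z ∈ Complex.slitPlane
  · apply hper.continuousAt.comp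
    exact (Complex.continuousAt_arg hsl).div_const _
  · -- z is a negative real; use the identity with -z
    have hre : z.re < 0 := by
      rcases lt_trichotomy z.re 0 with h | h | h
      · exact h
      · exfalso
        apply hz
        apply Complex.ext h
        by_contra him
        exact hsl (Complex.mem_slitPlane_iff.2 (Or.inr him))
      · exact absurd (Complex.mem_slitPlane_iff.2 (Or.inl h)) hsl
    have key : ∀ w : ℂ, w ≠ 0 → per c (xarg w) = per c (xarg (-w) + 1/2) := by
      intro w hw
      have hang := Complex.arg_neg_coe_angle hw
      rw [← Real.Angle.coe_add, Real.Angle.angle_eq_iff_two_pi_dvd_sub] at hang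
      obtain ⟨k, hk⟩ := hang
      have hpi := Real.pi_pos
      have hx : xarg w = (xarg (-w) + 1/2) + (-(k+1) : ℤ) := by
        have harg : w.arg = (-w).arg - Real.pi - 2*Real.pi*k := by linarith
        unfold xarg
        rw [harg]
        push_cast
        field_simp
        ring
      rw [hx, per_add_int]
    have hcont : ContinuousAt (fun w => per c (xarg (-w) + 1/2)) z := by
      have hnz : -z ∈ Complex.slitPlane := Complex.mem_slitPlane_iff.2 (Or.inl (by simpa using hre))
      apply (hper.continuousAt).comp
      apply ContinuousAt.add _ continuousAt_const
      apply ContinuousAt.div_const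
      exact (Complex.continuousAt_arg hnz).comp continuousAt_neg
    apply hcont.congr
    have hev : ∀ᶠ w in nhds z, w ≠ 0 := by
      apply eventually_ne_nhds hz
    filter_upwards [hev] with w hw
    exact (key w hw).symm

lemma Gz_continuousAt (c : ℝ) (hc : gf (c+1) = gf c) {p : ℝ × ℝ} (hp : cofv p ≠ 0) :
    ContinuousAt (Gz c) p := by
  unfold Gz
  apply ContinuousAt.sub
  · exact (continuous_norm.comp continuous_cofv).continuousAt
  · apply Real.continuous_exp.continuousAt.comp
    apply ContinuousAt.mul continuousAt_const
    exact (perArg_continuousAt c hc hp).comp continuous_cofv.continuousAt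


lemma half_le_sin {u : ℝ} (h1 : Real.pi/6 ≤ u) (h2 : u ≤ 5*Real.pi/6) :
    1/2 ≤ Real.sin u := by
  have hpi := Real.pi_pos
  rcases le_total u (Real.pi/2) with h | h
  · have := Real.strictMonoOn_sin.monotoneOn
      (a := Real.pi/6) (b := u)
      ⟨by linarith, by linarith⟩ ⟨by linarith, h⟩ h1
    rwa [Real.sin_pi_div_six] at this
  · rw [← Real.sin_pi_sub]
    have := Real.strictMonoOn_sin.monotoneOn
      (a := Real.pi/6) (b := Real.pi - u)
      ⟨by linarith, by linarith⟩ ⟨by linarith, by linarith⟩ (by linarith)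
    rwa [Real.sin_pi_div_six] at this

lemma sqrt3_ge_one : (1:ℝ) ≤ Real.sqrt 3 := by
  rw [show (1:ℝ) = Real.sqrt 1 by simp]
  exact Real.sqrt_le_sqrt (by norm_num)

lemma gbase : ∀ s ∈ Icc (1/3:ℝ) (4/3), s + Real.cos (Real.pi * s) ≤ 5/6 := by
  intro s hs
  have hpi := Real.pi_pos
  have hpi3 := Real.pi_gt_three
  rcases le_total s (5/6) with h1 | h1
  · -- decreasing part
    have hanti : AntitoneOn gf (Icc (1/3 : ℝ) (5/6)) := by
      apply antitoneOn_of_deriv_nonpos (convex_Icc _ _) continuous_gf.continuousOn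
      · intro x _
        exact (hasDerivAt_gf x).differentiableAt.differentiableWithinAt
      · intro x hx
        rw [interior_Icc] at hx
        rw [(hasDerivAt_gf x).deriv]
        unfold gd
        have hsin : 1/2 ≤ Real.sin (Real.pi * x) := by
          apply half_le_sin
          · nlinarith [hx.1]
          · nlinarith [hx.2]
        nlinarith
    have h2 := hanti ⟨le_refl _, by norm_num⟩ ⟨hs.1, h1⟩ hs.1
    unfold gf at h2
    have h3 : Real.cos (Real.pi * (1/3)) = 1/2 := by
      rw [show Real.pi * (1/3) = Real.pi/3 by ring, Real.cos_pi_div_three]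
    rw [h3] at h2
    linarith
  · rcases le_total s 1 with h2 | h2
    · -- middle part: cos πs ≤ -√3/2
      have hcos : Real.cos (Real.pi * s) ≤ Real.cos (Real.pi * (5/6)) := by
        apply Real.strictAntiOn_cos.antitoneOn
        · constructor <;> nlinarith
        · constructor <;> nlinarith
        · nlinarith
      have h56 : Real.cos (Real.pi * (5/6)) = -(Real.sqrt 3 / 2) := by
        rw [show Real.pi * (5/6) = Real.pi - Real.pi/6 by ring, Real.cos_pi_sub,
          Real.cos_pi_div_six]
      rw [h56] at hcos
      have := sqrt3_ge_one
      linarith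
    · -- last part: cos πs ≤ -1/2
      have hcos : Real.cos (Real.pi * s) = Real.cos (2*Real.pi - Real.pi * s) := by
        rw [Real.cos_two_pi_sub]
      have hcos2 : Real.cos (2*Real.pi - Real.pi * s) ≤ Real.cos (Real.pi * (2/3)) := by
        apply Real.strictAntiOn_cos.antitoneOn
        · constructor <;> nlinarith
        · constructor <;> nlinarith [hs.2]
        · nlinarith [hs.2]
      have h23 : Real.cos (Real.pi * (2/3)) = -(1/2) := by
        rw [show Real.pi * (2/3) = Real.pi - Real.pi/3 by ring, Real.cos_pi_sub,
          Real.cos_pi_div_three]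
      rw [hcos] at *
      rw [h23] at hcos2
      linarith [hs.2, hcos2]

lemma gf_window (k : ℕ) : ∀ x ∈ Icc (2*k + 1/3 : ℝ) (2*k + 4/3), gf x ≤ 2*k + 5/6 := by
  intro x hx
  have hsplit : gf x = 2*k + ((x - 2*k) + Real.cos (Real.pi * (x - 2*k))) := by
    unfold gf
    have : Real.pi * x = Real.pi * (x - 2*k) + (k : ℤ) * (2 * Real.pi) := by push_cast; ring
    rw [this, Real.cos_add_int_mul_two_pi]
    ring
  rw [hsplit]
  have := gbase (x - 2*k) ⟨by linarith [hx.1], by linarith [hx.2]⟩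
  linarith

lemma nxx_odd_val (k : ℕ) : nxx (2*k+1) = 2*(k:ℝ) + 1/3 := by
  rw [nxx_odd]; push_cast; ring

lemma window_hc (j : ℕ) : gf (nxx j + 1) = gf (nxx j) := by
  have := (gf_eq_shift_iff (nxx j) 1).2 (Or.inr (Or.inl ⟨rfl, cos_nxx j⟩))
  simpa using this

lemma per_ub (k : ℕ) (y : ℝ) : per (nxx (2*k+1)) y ≤ 2*k + 5/6 := by
  obtain ⟨x, hx, hpx, _⟩ := per_spec (nxx (2*k+1)) y
  rw [hpx]
  rw [nxx_odd_val] at hx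
  apply gf_window k
  exact ⟨hx.1, by linarith [hx.2]⟩

lemma per_lb' (k : ℕ) (y : ℝ) : 2*(k:ℝ) - 2/3 ≤ per (nxx (2*k+1)) y := by
  have h := per_lb (nxx (2*k+1)) y
  have h2 := nxx_odd_val k
  rw [h2] at h
  rw [h2]
  linarith

/-- a zero of `Gz` lies on the spiral -/
lemma mem_of_Gz_zero (m : ℕ) {k : ℕ} (hk : k < m) {p : ℝ × ℝ}
    (hG : Gz (nxx (2*k+1)) p = 0) : p ∈ cur m '' Icc 0 1 := by
  obtain ⟨x, hx, hpx, n, hxn⟩ := per_spec (nxx (2*k+1)) (xarg (cofv p))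
  have habs : ‖cofv p‖ = Real.exp (2 * Real.pi * gf x) := by
    unfold Gz at hG
    rw [hpx] at hG
    linarith
  have hz : cofv p = cpt x := by
    have h1 := xarg_spec (cofv p)
    rw [habs] at h1
    rw [h1, cpt_split]
    congr 1
    rw [Complex.exp_eq_exp_iff_exists_int]
    refine ⟨-n, ?_⟩
    rw [hxn]
    push_cast
    ring
  rw [mem_cur_iff]
  refine ⟨x, ?_, by rw [← hz, vecOf_cofv]⟩
  rw [nxx_odd_val] at hx
  have hk' : (k:ℝ) + 1 ≤ m := by exact_mod_cast Nat.succ_le_of_lt hk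
  constructor
  · have := hx.1; linarith
  · have := hx.2; linarith



lemma gf_nxx_odd (k : ℕ) : gf (nxx (2*k+1)) = 2*k + 5/6 := by
  rw [gf_nxx, nxx_odd_val]
  ring

lemma per_node_shift (k : ℕ) (n : ℤ) : per (nxx (2*k+1)) (nxx (2*k+1) + n) = 2*k + 5/6 := by
  rw [per_int_shift, gf_nxx_odd]

lemma Gz_pL (k : ℕ) : Gz (nxx (2*k+1)) pL < 0 := by
  rw [pL, Gz_cpt, gf_left]
  have hper : per (nxx (2*k+1)) (-(2/3)) = 2*k + 5/6 := by
    have := per_node_shift k (-(2*k+1))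
    rw [show nxx (2*k+1) + ((-(2*(k:ℤ)+1) : ℤ) : ℝ) = -(2/3) by rw [nxx_odd_val]; push_cast; ring] at this
    exact this
  rw [hper]
  have hpi := Real.pi_pos
  have hk : (0:ℝ) ≤ k := Nat.cast_nonneg k
  have : Real.exp (2*Real.pi * (-(7/6))) < Real.exp (2*Real.pi*(2*k+5/6)) := by
    apply Real.exp_lt_exp.2
    nlinarith
  linarith

lemma Gz_pR (m : ℕ) {k : ℕ} (hk : k < m) : 0 < Gz (nxx (2*k+1)) (pR m) := by
  rw [pR, Gz_cpt, gf_right]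
  have hper : per (nxx (2*k+1)) (2*m + 1/3) = 2*k + 5/6 := by
    have := per_node_shift k (2*((m:ℤ)-k))
    rw [show nxx (2*k+1) + ((2*((m:ℤ)-(k:ℤ)) : ℤ) : ℝ) = 2*m + 1/3 by rw [nxx_odd_val]; push_cast; ring] at this
    exact this
  rw [hper]
  have hpi := Real.pi_pos
  have hk' : (k:ℝ) + 1 ≤ m := by exact_mod_cast Nat.succ_le_of_lt hk
  have : Real.exp (2*Real.pi*(2*k+5/6)) < Real.exp (2*Real.pi * (2*m+5/6)) := by
    apply Real.exp_lt_exp.2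
    nlinarith
  linarith

/-- intermediate value: the curve must hit each separating loop -/
lemma exists_crossing (c : ℝ) (hc : gf (c+1) = gf c) (f : ℝ → ℝ × ℝ) (hf : Continuous f)
    (ha : Gz c (f 0) < 0) (hb : 0 < Gz c (f 1)) :
    ∃ t ∈ Icc (0:ℝ) 1, Gz c (f t) = 0 := by
  set ε := Real.exp (2*Real.pi*(c-1)) with hε
  have hεpos : 0 < ε := Real.exp_pos _
  set U : Set ℝ := {t | ‖cofv (f t)‖ < ε} with hU
  have hUopen : IsOpen U :=
    isOpen_Iio.preimage (continuous_norm.comp (continuous_cofv.comp hf))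
  have hUneg : ∀ t ∈ U, Gz c (f t) < 0 := fun t ht => Gz_neg c ht
  have hcontf : ∀ t ∉ U, ContinuousAt (fun s => Gz c (f s)) t := by
    intro t ht
    have hne : cofv (f t) ≠ 0 := by
      intro h0
      apply ht
      simp only [hU, mem_setOf_eq, h0]
      simpa using hεpos
    exact (Gz_continuousAt c hc hne).comp hf.continuousAt
  set S := {t | t ∈ Icc (0:ℝ) 1 ∧ Gz c (f t) ≤ 0} with hS
  have hS0 : (0:ℝ) ∈ S := ⟨⟨le_refl _, zero_le_one⟩, le_of_lt ha⟩
  have hSb : BddAbove S := ⟨1, fun t ht => ht.1.2⟩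
  have hSne : S.Nonempty := ⟨0, hS0⟩
  set t0 := sSup S with ht0
  have ht0mem : t0 ∈ Icc (0:ℝ) 1 := ⟨le_csSup hSb hS0, csSup_le hSne (fun t ht => ht.1.2)⟩
  have ht0le : Gz c (f t0) ≤ 0 := by
    by_cases hUt : t0 ∈ U
    · exact le_of_lt (hUneg t0 hUt)
    · have hcl : t0 ∈ closure S := csSup_mem_closure hSne hSb
      haveI hnb : (nhdsWithin t0 S).NeBot := mem_closure_iff_nhdsWithin_neBot.1 hcl
      have htend : Filter.Tendsto (fun s => Gz c (f s)) (nhdsWithin t0 S)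
          (nhds (Gz c (f t0))) :=
        ((hcontf t0 hUt).continuousWithinAt (s := S)).tendsto
      apply le_of_tendsto htend
      filter_upwards [self_mem_nhdsWithin] with t ht
      exact ht.2
  have ht0lt1 : t0 < 1 := by
    rcases lt_or_eq_of_le ht0mem.2 with h | h
    · exact h
    · exfalso
      rw [h] at ht0le
      linarith
  refine ⟨t0, ht0mem, ?_⟩
  by_contra hne0
  have hlt : Gz c (f t0) < 0 := lt_of_le_of_ne ht0le hne0
  obtain ⟨δ, hδpos, hball⟩ : ∃ δ > 0, ∀ s : ℝ, |s - t0| < δ → Gz c (f s) < 0 := by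
    by_cases hUt : t0 ∈ U
    · obtain ⟨δ, hδpos, hsub⟩ := Metric.isOpen_iff.1 hUopen t0 hUt
      refine ⟨δ, hδpos, fun s hs => hUneg s (hsub ?_)⟩
      rw [Metric.mem_ball, Real.dist_eq]
      exact hs
    · have hev : {s | Gz c (f s) < 0} ∈ nhds t0 := by
        have := (hcontf t0 hUt).preimage_mem_nhds (Iio_mem_nhds hlt)
        exact this
      obtain ⟨δ, hδpos, hsub⟩ := Metric.mem_nhds_iff.1 hev
      refine ⟨δ, hδpos, fun s hs => hsub ?_⟩
      rw [Metric.mem_ball, Real.dist_eq]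
      exact hs
  set t1 := min 1 (t0 + δ/2) with ht1
  have ht1gt : t0 < t1 := by
    apply lt_min ht0lt1
    linarith
  have ht1S : t1 ∈ S := by
    refine ⟨⟨le_trans ht0mem.1 (le_of_lt ht1gt), min_le_left _ _⟩, ?_⟩
    apply le_of_lt
    apply hball
    have h1 : t1 ≤ t0 + δ/2 := min_le_right _ _
    rw [abs_lt]
    constructor <;> [linarith; linarith]
  have := le_csSup hSb ht1S
  rw [← ht0] at this
  linarith

/-- the band of a crossing point -/
lemma Gz_zero_band (k : ℕ) {p : ℝ × ℝ} (h : Gz (nxx (2*k+1)) p = 0) :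
    Real.exp (2*Real.pi*(2*k - 2/3)) ≤ ‖cofv p‖ ∧
      ‖cofv p‖ ≤ Real.exp (2*Real.pi*(2*k + 5/6)) := by
  have habs : ‖cofv p‖ = Real.exp (2*Real.pi * per (nxx (2*k+1)) (xarg (cofv p))) := by
    unfold Gz at h
    linarith
  rw [habs]
  have hpi := Real.pi_pos
  constructor
  · apply Real.exp_le_exp.2
    nlinarith [per_lb' k (xarg (cofv p))]
  · apply Real.exp_le_exp.2
    nlinarith [per_ub k (xarg (cofv p))]


lemma abs_cofv_pL : ‖cofv pL‖ = Real.exp (2*Real.pi * (-(7/6))) := by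
  rw [pL, cofv_vecOf, abs_cpt, gf_left]

lemma abs_cofv_pR (m : ℕ) : ‖cofv (pR m)‖ = Real.exp (2*Real.pi * (2*m + 5/6)) := by
  rw [pR, cofv_vecOf, abs_cpt, gf_right]

/-- the spiral forces at least `m+2` intersection points -/
lemma lower_bound (m : ℕ) (f : ℝ → ℝ × ℝ) (hf : Continuous f)
    (h0 : f 0 = pL) (h1 : f 1 = pR m)
    (hfin : ((f '' Icc 0 1) ∩ (cur m '' Icc 0 1)).Finite) :
    m + 2 ≤ ((f '' Icc 0 1) ∩ (cur m '' Icc 0 1)).ncard := by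
  have hex : ∀ k : ℕ, ∃ t, t ∈ Icc (0:ℝ) 1 ∧ (k < m → Gz (nxx (2*k+1)) (f t) = 0) := by
    intro k
    by_cases hk : k < m
    · obtain ⟨t, ht, hGz⟩ := exists_crossing (nxx (2*k+1)) (window_hc _) f hf
        (by rw [h0]; exact Gz_pL k) (by rw [h1]; exact Gz_pR m hk)
      exact ⟨t, ht, fun _ => hGz⟩
    · exact ⟨0, ⟨le_refl _, zero_le_one⟩, fun h => absurd h hk⟩
  choose T hT1 hT2 using hex
  set Q : ℕ → ℝ × ℝ := fun i => if i = 0 then pL else if i = m+1 then pR m else f (T (i-1))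
    with hQ
  have hQ0 : Q 0 = pL := by simp [hQ]
  have hQm : Q (m+1) = pR m := by simp [hQ]
  have hQmid : ∀ i : ℕ, i ≠ 0 → i ≠ m+1 → Q i = f (T (i-1)) := by
    intro i h0' h1'
    simp only [hQ, if_neg h0', if_neg h1']
  have hQsub : Q '' {i : ℕ | i < m+2} ⊆ (f '' Icc 0 1) ∩ (cur m '' Icc 0 1) := by
    rintro q ⟨i, hi, rfl⟩
    simp only [mem_setOf_eq] at hi
    rcases eq_or_ne i 0 with rfl | hi0
    · rw [hQ0]
      constructor
      · exact ⟨0, ⟨le_refl _, zero_le_one⟩, h0⟩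
      · rw [mem_cur_iff]
        exact ⟨-(2/3), ⟨le_refl _, by nlinarith [Nat.cast_nonneg (α := ℝ) m]⟩, by rw [pL]⟩
    · rcases eq_or_ne i (m+1) with rfl | him
      · rw [hQm]
        constructor
        · exact ⟨1, ⟨zero_le_one, le_refl _⟩, h1⟩
        · rw [mem_cur_iff]
          exact ⟨2*m + 1/3, ⟨by nlinarith [Nat.cast_nonneg (α := ℝ) m], le_refl _⟩, by rw [pR]⟩
      · have hii : i - 1 < m := by omega
        rw [hQmid i hi0 him]
        constructor
        · exact ⟨T (i-1), hT1 (i-1), rfl⟩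
        · exact mem_of_Gz_zero m hii (hT2 (i-1) hii)
  have hband : ∀ i : ℕ, i ≠ 0 → i ≠ m+1 → i < m+2 →
      Real.exp (2*Real.pi*(2*((i:ℝ)-1) - 2/3)) ≤ ‖cofv (Q i)‖ ∧
        ‖cofv (Q i)‖ ≤ Real.exp (2*Real.pi*(2*((i:ℝ)-1) + 5/6)) := by
    intro i hi0 him hi
    have hii : i - 1 < m := by omega
    have hge1 : 1 ≤ i := by omega
    have hc : ((i-1 : ℕ) : ℝ) = (i:ℝ) - 1 := by
      rw [Nat.cast_sub hge1]; norm_num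
    have hQi : Q i = f (T (i-1)) := hQmid i hi0 him
    obtain ⟨hb1, hb2⟩ := Gz_zero_band (i-1) (hT2 (i-1) hii)
    rw [hc] at hb1 hb2
    rw [hQi]
    exact ⟨hb1, hb2⟩
  have hAQ : ∀ i j : ℕ, i < j → j < m + 2 →
      ‖cofv (Q i)‖ < ‖cofv (Q j)‖ := by
    intro i j hij hj
    have hpi := Real.pi_pos
    rcases eq_or_ne i 0 with rfl | hi0
    · rcases eq_or_ne j (m+1) with rfl | hjm
      · rw [hQ0, hQm, abs_cofv_pL, abs_cofv_pR]
        apply Real.exp_lt_exp.2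
        nlinarith [Nat.cast_nonneg (α := ℝ) m]
      · have := (hband j (by omega) hjm hj).1
        have hQ0 : Q 0 = pL := by rw [hQ]; simp
        rw [hQ0, abs_cofv_pL]
        have hj1 : (1:ℝ) ≤ j := by exact_mod_cast (by omega : 1 ≤ j)
        calc Real.exp (2*Real.pi * (-(7/6))) < Real.exp (2*Real.pi*(2*((j:ℝ)-1) - 2/3)) := by
              apply Real.exp_lt_exp.2
              nlinarith
          _ ≤ _ := this
    · have hi1 : (1:ℝ) ≤ i := by exact_mod_cast (by omega : 1 ≤ i)
      have him : i ≠ m + 1 := by omega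
      have hubi := (hband i hi0 him (by omega)).2
      rcases eq_or_ne j (m+1) with rfl | hjm
      · rw [hQm, abs_cofv_pR]
        have hiM : (i:ℝ) ≤ m := by exact_mod_cast (by omega : i ≤ m)
        calc ‖cofv (Q i)‖ ≤ Real.exp (2*Real.pi*(2*((i:ℝ)-1) + 5/6)) := hubi
          _ < _ := by
              apply Real.exp_lt_exp.2
              nlinarith
      · have hlbj := (hband j (by omega) hjm hj).1
        have hij' : (i:ℝ) + 1 ≤ j := by exact_mod_cast Nat.succ_le_of_lt hij
        calc ‖cofv (Q i)‖ ≤ Real.exp (2*Real.pi*(2*((i:ℝ)-1) + 5/6)) := hubi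
          _ < Real.exp (2*Real.pi*(2*((j:ℝ)-1) - 2/3)) := by
              apply Real.exp_lt_exp.2
              nlinarith
          _ ≤ _ := hlbj
  have hQinj : InjOn Q {i : ℕ | i < m+2} := by
    intro a ha b hb hab
    simp only [mem_setOf_eq] at ha hb
    by_contra hne
    rcases Nat.lt_or_ge a b with h | h
    · have := hAQ a b h hb
      rw [hab] at this
      exact lt_irrefl _ this
    · have hba : b < a := by omega
      have := hAQ b a hba ha
      rw [hab] at this
      exact lt_irrefl _ this
  have hcard : (Q '' {i : ℕ | i < m+2}).ncard = m + 2 := by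
    have h1 : {i : ℕ | i < m+2} = ↑(Finset.range (m+2)) := by ext i; simp
    rw [h1, Set.ncard_image_of_injOn (by rw [← h1]; exact hQinj),
      Set.ncard_coe_finset, Finset.card_range]
  calc m + 2 = (Q '' {i : ℕ | i < m+2}).ncard := hcard.symm
    _ ≤ _ := Set.ncard_le_ncard hQsub hfin


-- ===== assembly =====

/-- the spiral plane curve -/
def spiralCurve (m : ℕ) : PlaneCurve where
  toFun := cur m
  contDiff := contDiff_cur m
  deriv_ne := fun t _ => deriv_cur_ne m t
  ends_ne := ends_ne_spiral m
  multi_finite := by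
    rw [crossings_spiral]
    exact Set.Finite.image _ (Set.finite_Iio (2*m))
  double_point := by
    intro p hp
    rw [crossings_spiral] at hp
    obtain ⟨j, hj, rfl⟩ := hp
    refine ⟨invx m (nxx j), invx m (nxx j + 1), ?_, preimage_node m hj, li_node m j⟩
    intro h
    have := congrArg (xm m) h
    rw [xm_invx, xm_invx] at this
    linarith

/-- the straight reference plane curve -/
def segCurve (m : ℕ) : PlaneCurve where
  toFun := seg m
  contDiff := contDiff_seg m
  deriv_ne := fun t _ => deriv_seg_ne m t
  ends_ne := by
    rw [seg_zero, seg_one, pL, pR]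
    intro h
    apply abs_ne_of_gf_ne (x := -(2/3)) (y := 2*m+1/3) _ (vecOf_inj h)
    rw [gf_left, gf_right]
    have : (0:ℝ) ≤ m := Nat.cast_nonneg m
    intro hcontr
    linarith
  multi_finite := by
    have : {p : ℝ × ℝ | ∃ s ∈ Icc (0:ℝ) 1, ∃ t ∈ Icc (0:ℝ) 1,
        s ≠ t ∧ seg m s = p ∧ seg m t = p} = ∅ := by
      ext p
      simp only [mem_setOf_eq, mem_empty_iff_false, iff_false]
      rintro ⟨s, _, t, _, hst, h1, h2⟩
      exact hst (seg_inj m (h1.trans h2.symm))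
    rw [this]
    exact Set.finite_empty
  double_point := by
    intro p hp
    exfalso
    obtain ⟨s, _, t, _, hst, h1, h2⟩ := hp
    exact hst (seg_inj m (h1.trans h2.symm))

lemma spiral_crossingNumber (m : ℕ) : (spiralCurve m).crossingNumber = 2*m := by
  unfold PlaneCurve.crossingNumber PlaneCurve.crossings
  have h : (spiralCurve m).toFun = cur m := rfl
  rw [h, crossings_spiral, crossings_ncard]

lemma seg_similar (m : ℕ) : PlaneCurve.Similar (segCurve m) (spiralCurve m) := by
  refine ⟨?_, ?_, ?_, ?_⟩
  · show seg m 0 = cur m 0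
    rw [seg_zero, cur_zero]
  · show seg m 1 = cur m 1
    rw [seg_one, cur_one]
  · show (seg m '' Icc 0 1 ∩ cur m '' Icc 0 1).Finite
    rw [inter_eq m]
    exact Set.Finite.image _ (Set.finite_Iio (m+2))
  · exact li_seg_cur m

lemma spiral_distance (m : ℕ) (hm : 1 ≤ m) : (spiralCurve m).distance = m := by
  unfold PlaneCurve.distance
  have hmem : m ∈ {n : ℕ | ∃ γ' : PlaneCurve, PlaneCurve.Similar γ' (spiralCurve m) ∧
      (γ'.image ∩ (spiralCurve m).image).ncard = n + 2} := by
    refine ⟨segCurve m, seg_similar m, ?_⟩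
    show (seg m '' Icc 0 1 ∩ cur m '' Icc 0 1).ncard = m + 2
    exact inter_ncard m hm
  apply le_antisymm
  · exact Nat.sInf_le hmem
  · apply le_csInf ⟨m, hmem⟩
    rintro n ⟨γ', hsim, hcard⟩
    obtain ⟨h0, h1, hfin, _⟩ := hsim
    have hlb := lower_bound m γ'.toFun γ'.contDiff.continuous
      (by rw [h0]; exact cur_zero m) (by rw [h1]; exact cur_one m) hfin
    have : (γ'.image ∩ (spiralCurve m).image).ncard = n + 2 := hcard
    rw [PlaneCurve.image, PlaneCurve.image] at this
    have h2 : (γ'.toFun '' Icc 0 1 ∩ cur m '' Icc 0 1).ncard = n + 2 := this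
    rw [h2] at hlb
    omega
    
end Spiral

/-- For every `m ≥ 1` there is a plane curve with `c(γ) = 2m` and `d(γ) = m`;
consequently any upper bound `f` for `d` in terms of `c` satisfies `f(2m) ≥ m`. -/
theorem exists_curve_crossing_two_mul_distance :
    (∀ m : ℕ, 1 ≤ m → ∃ γ : PlaneCurve, γ.crossingNumber = 2 * m ∧ γ.distance = m) ∧
    ∀ f : ℕ → ℕ, (∀ γ : PlaneCurve, γ.distance ≤ f γ.crossingNumber) →
      ∀ m : ℕ, 1 ≤ m → m ≤ f (2 * m) := by
  have main : ∀ m : ℕ, 1 ≤ m → ∃ γ : PlaneCurve, γ.crossingNumber = 2 * m ∧ γ.distance = m :=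
    fun m hm => ⟨spiralCurve m, spiral_crossingNumber m, spiral_distance m hm⟩
  refine ⟨main, ?_⟩
  intro f hf m hm
  obtain ⟨γ, hc, hd⟩ := main m hm
  have h := hf γ
  rw [hc, hd] at h
  exact h
end
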